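/- arXiv:1302.5415 — 13 statements merged into one kernel-verified Lean document; each statement's English description precedes it below -/
import Mathlib

section
/- Let (M,≤) be a nonempty quasi-ordered set that is sequentially inductive, and let φ : M → ℝ be decreasing and bounded below. Then the set max(M;≤;φ) of (≤,φ)-maximal points is ≤-cofinal in M (for each u ∈ M there exists v ∈ max(M;≤;φ) with u ≤ v) and ≤-invariant in M (if z ∈ max(M;≤;φ) and z ≤ w then w ∈ max(M;≤;φ)). -/
/-- Brezis-Browder ordering principle: if `(M, le)` is a nonempty sequentially inductive
quasi-ordered set and `φ : M → ℝ` is decreasing and bounded below, then the set of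
`(le, φ)`-maximal points is `le`-cofinal and `le`-invariant. -/
theorem stmt_0 {M : Type*} [Nonempty M] (le : M → M → Prop)
    (hrefl : ∀ x, le x x)
    (htrans : ∀ x y z, le x y → le y z → le x z)
    (hind : ∀ x : ℕ → M, (∀ n, le (x n) (x (n + 1))) → ∃ v, ∀ n, le (x n) v)
    (φ : M → ℝ)
    (hdecr : ∀ x y, le x y → φ y ≤ φ x)
    (hbdd : ∃ c : ℝ, ∀ x, c ≤ φ x) :
    (∀ u : M, ∃ v, le u v ∧ ∀ w, le v w → φ v = φ w) ∧
    (∀ z, (∀ w, le z w → φ z = φ w) → ∀ y, le z y → ∀ w, le y w → φ y = φ w) := by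
  obtain ⟨c, hc⟩ := hbdd
  constructor
  · intro u
    have hstep : ∀ (n : ℕ) (x : M), ∃ y, le x y ∧
        φ y < sInf (φ '' {w | le x w}) + 1/(n+1) := by
      intro n x
      have hne : (φ '' {w | le x w}).Nonempty := ⟨φ x, x, hrefl x, rfl⟩
      have hpos : (0:ℝ) < 1/(n+1) := by positivity
      obtain ⟨a, ⟨y, hy, rfl⟩, ha⟩ := Real.lt_sInf_add_pos hne hpos
      exact ⟨y, hy, ha⟩
    choose f hf1 hf2 using hstep
    let x : ℕ → M := fun n => Nat.rec u (fun n ih => f n ih) n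
    have hasc : ∀ n, le (x n) (x (n+1)) := fun n => hf1 n (x n)
    obtain ⟨v, hv⟩ := hind x hasc
    refine ⟨v, hv 0, ?_⟩
    intro w hw
    have hle : φ w ≤ φ v := hdecr v w hw
    have hge : φ v ≤ φ w := by
      apply le_of_forall_pos_le_add
      intro ε hε
      obtain ⟨n, hn⟩ := exists_nat_one_div_lt hε
      have h1 : le (x n) w := htrans _ _ _ (hv n) hw
      have hbd : BddBelow (φ '' {z | le (x n) z}) := by
        refine ⟨c, ?_⟩
        rintro r ⟨z, _, rfl⟩
        exact hc z
      have h2 : sInf (φ '' {z | le (x n) z}) ≤ φ w := csInf_le hbd ⟨w, h1, rfl⟩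
      have h3 : φ v ≤ φ (x (n+1)) := hdecr _ _ (hv (n+1))
      have h4 : φ (x (n+1)) < sInf (φ '' {z | le (x n) z}) + 1/(n+1) := hf2 n (x n)
      refine le_of_lt ?_
      calc φ v ≤ φ (x (n+1)) := h3
        _ < sInf (φ '' {z | le (x n) z}) + 1/(n+1) := h4
        _ ≤ φ w + ε := add_le_add h2 hn.le
    linarith
  · intro z hz y hzy w hyw
    have h1 := hz y hzy
    have h2 := hz w (htrans _ _ _ hzy hyw)
    linarith
end

section
/- Let (M,≤) be a nonempty quasi-ordered set that is sequentially inductive, and let (F(i); i ≥ 0) be a sequence of nonempty subsets of M, each of which is both ≤-cofinal and ≤-invariant. Then the intersection Y := ∩{F(i); i ≥ 0} is again ≤-cofinal and ≤-invariant (in particular, Y is nonempty). -/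
/-- In a nonempty sequentially inductive quasi-ordered set, the intersection of a countable
family of nonempty, `le`-cofinal and `le`-invariant subsets is again `le`-cofinal and
`le`-invariant (hence nonempty). -/
theorem stmt_4 {M : Type*} [Nonempty M] (le : M → M → Prop)
    (hrefl : ∀ x, le x x)
    (htrans : ∀ x y z, le x y → le y z → le x z)
    (hind : ∀ x : ℕ → M, (∀ n, le (x n) (x (n + 1))) → ∃ v, ∀ n, le (x n) v)
    (F : ℕ → Set M)
    (hne : ∀ i, (F i).Nonempty)
    (hcof : ∀ i, ∀ u : M, ∃ v ∈ F i, le u v)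
    (hinv : ∀ i, ∀ z ∈ F i, ∀ w, le z w → w ∈ F i) :
    (∀ u : M, ∃ v ∈ ⋂ i, F i, le u v) ∧
    (∀ z ∈ ⋂ i, F i, ∀ w, le z w → w ∈ ⋂ i, F i) := by
  constructor
  · intro u
    -- choice function: next u i picks an element of F i above u
    choose f hf hle using hcof
    -- build ascending sequence
    let x : ℕ → M := fun n => Nat.rec u (fun n xn => f n xn) n
    have hx0 : x 0 = u := rfl
    have hxs : ∀ n, x (n + 1) = f n (x n) := fun n => rfl
    have hasc : ∀ n, le (x n) (x (n + 1)) := by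
      intro n; rw [hxs]; exact hle n (x n)
    obtain ⟨v, hv⟩ := hind x hasc
    refine ⟨v, ?_, ?_⟩
    · refine Set.mem_iInter.2 fun i => ?_
      have hmem : x (i + 1) ∈ F i := by rw [hxs]; exact hf i (x i)
      exact hinv i _ hmem v (hv (i + 1))
    · exact htrans u (x 0) v (hrefl u) (hv 0)
  · intro z hz w hw
    refine Set.mem_iInter.2 fun i => ?_
    exact hinv i z (Set.mem_iInter.1 hz i) w hw
end

section
/- Let (M,≤) be a nonempty quasi-ordered set that is sequentially inductive, and let φ : M → ℝ be decreasing and bounded (both −∞ < inf φ(M) and sup φ(M) < ∞). Then the set max(M;≤;φ) of (≤,φ)-maximal points is ≤-cofinal and ≤-invariant in M. -/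
/-- (BB-P1): if `(M, le)` is a nonempty sequentially inductive quasi-ordered set and
`φ : M → ℝ` is decreasing and bounded (below and above), then the set of `(le, φ)`-maximal
points is `le`-cofinal and `le`-invariant. -/
theorem stmt_5 {M : Type*} [Nonempty M] (le : M → M → Prop)
    (hrefl : ∀ x, le x x)
    (htrans : ∀ x y z, le x y → le y z → le x z)
    (hind : ∀ x : ℕ → M, (∀ n, le (x n) (x (n + 1))) → ∃ v, ∀ n, le (x n) v)
    (φ : M → ℝ)
    (hdecr : ∀ x y, le x y → φ y ≤ φ x)
    (hbdd : ∃ a b : ℝ, ∀ x, a ≤ φ x ∧ φ x ≤ b) :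
    (∀ u : M, ∃ v, le u v ∧ ∀ w, le v w → φ v = φ w) ∧
    (∀ z, (∀ w, le z w → φ z = φ w) → ∀ y, le z y → ∀ w, le y w → φ y = φ w) := by
  obtain ⟨a, b, hab⟩ := hbdd
  -- β x = inf of φ over successors of x
  set β : M → ℝ := fun x => sInf (φ '' {w | le x w}) with hβ
  have hne : ∀ x : M, (φ '' {w | le x w}).Nonempty := fun x => ⟨φ x, x, hrefl x, rfl⟩
  have hbdl : ∀ x : M, BddBelow (φ '' {w | le x w}) := by
    intro x
    exact ⟨a, by rintro r ⟨w, -, rfl⟩; exact (hab w).1⟩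
  have hβle : ∀ x w, le x w → β x ≤ φ w := by
    intro x w h
    exact csInf_le (hbdl x) ⟨w, h, rfl⟩
  -- choice of a near-minimizing successor
  have hpick : ∀ (x : M) (n : ℕ), ∃ y, le x y ∧ φ y < β x + (1/2)^n := by
    intro x n
    have hlt : β x < β x + (1/2)^n := by
      have : (0:ℝ) < (1/2)^n := by positivity
      linarith
    obtain ⟨r, ⟨y, hy, rfl⟩, hr⟩ := exists_lt_of_csInf_lt (hne x) hlt
    exact ⟨y, hy, hr⟩
  constructor
  · intro u
    choose pick hpick1 hpick2 using hpick
    let x : ℕ → M := fun n => Nat.rec u (fun n xn => pick xn n) n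
    have hasc : ∀ n, le (x n) (x (n + 1)) := fun n => hpick1 (x n) n
    obtain ⟨v, hv⟩ := hind x hasc
    refine ⟨v, htrans u (x 0) v (hrefl u) (hv 0), ?_⟩
    intro w hw
    have hwle : φ w ≤ φ v := hdecr v w hw
    have key : ∀ n : ℕ, φ v ≤ φ w + (1/2)^n := by
      intro n
      have h1 : le (x n) w := htrans _ _ _ (hv n) hw
      have h2 : β (x n) ≤ φ w := hβle _ _ h1
      have h3 : φ v ≤ φ (x (n+1)) := hdecr _ _ (hv (n+1))
      have h4 : φ (x (n+1)) < β (x n) + (1/2)^n := hpick2 (x n) n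
      linarith
    have : φ v ≤ φ w := by
      refine le_of_forall_pos_le_add ?_
      intro ε hε
      obtain ⟨n, hn⟩ := exists_pow_lt_of_lt_one hε (by norm_num : (1:ℝ)/2 < 1)
      exact (key n).trans (by linarith)
    linarith
  · intro z hz y hzy w hyw
    have h1 : φ z = φ y := hz y hzy
    have h2 : φ z = φ w := hz w (htrans z y w hzy hyw)
    linarith
end

section
/- (Cârjă–Ursescu variational principle.) Let (M,≤) be a nonempty quasi-ordered set that is sequentially inductive, and let φ : M → ℝ ∪ {−∞,+∞} be decreasing (no boundedness assumed; the values −∞ and +∞ are allowed). Then the set max(M;≤;φ) of (≤,φ)-maximal points is ≤-cofinal and ≤-invariant in M. -/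
noncomputable def psiCU (e : EReal) : ℝ :=
  if e = ⊤ then 2 else if e = ⊥ then -2 else Real.arctan e.toReal

lemma psiCU_bot : psiCU ⊥ = -2 := by simp [psiCU]

lemma psiCU_top : psiCU ⊤ = 2 := by simp [psiCU]

lemma psiCU_coe (x : ℝ) : psiCU x = Real.arctan x := by
  simp [psiCU, EReal.coe_ne_top, EReal.coe_ne_bot]

lemma arctan_lt_two (x : ℝ) : Real.arctan x < 2 :=
  (Real.arctan_lt_pi_div_two x).trans (by nlinarith [Real.pi_lt_d2])

lemma neg_two_lt_arctan (x : ℝ) : -2 < Real.arctan x :=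
  lt_trans (by nlinarith [Real.pi_lt_d2]) (Real.neg_pi_div_two_lt_arctan x)

lemma psiCU_strictMono : StrictMono psiCU := by
  intro a b hab
  induction a using EReal.rec <;> induction b using EReal.rec <;>
    simp_all [psiCU_bot, psiCU_top, psiCU_coe]
  all_goals first
    | exact neg_two_lt_arctan _
    | exact arctan_lt_two _
    | exact Real.arctan_strictMono (by assumption)

lemma neg_two_le_psiCU (e : EReal) : -2 ≤ psiCU e := by
  induction e using EReal.rec <;>
    simp [psiCU_bot, psiCU_top, psiCU_coe, (neg_two_lt_arctan _).le]

/-- Cârjă–Ursescu variational principle (BB-P2): if `(M, le)` is a nonempty sequentially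
inductive quasi-ordered set and `φ : M → ℝ ∪ {−∞, +∞}` is decreasing, then the set of
`(le, φ)`-maximal points is `le`-cofinal and `le`-invariant. -/
theorem stmt_6 {M : Type*} [Nonempty M] (le : M → M → Prop)
    (hrefl : ∀ x, le x x)
    (htrans : ∀ x y z, le x y → le y z → le x z)
    (hind : ∀ x : ℕ → M, (∀ n, le (x n) (x (n + 1))) → ∃ v, ∀ n, le (x n) v)
    (φ : M → EReal)
    (hdecr : ∀ x y, le x y → φ y ≤ φ x) :
    (∀ u : M, ∃ v, le u v ∧ ∀ w, le v w → φ v = φ w) ∧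
    (∀ z, (∀ w, le z w → φ z = φ w) → ∀ y, le z y → ∀ w, le y w → φ y = φ w) := by
  constructor
  · intro u
    set ψ : M → ℝ := fun x => psiCU (φ x) with hψ
    set β : M → ℝ := fun x => sInf (ψ '' {y | le x y}) with hβ
    have hbdd : ∀ x : M, BddBelow (ψ '' {y | le x y}) :=
      fun x => ⟨-2, by rintro r ⟨y, -, rfl⟩; exact neg_two_le_psiCU _⟩
    have hne : ∀ x : M, (ψ '' {y | le x y}).Nonempty :=
      fun x => ⟨ψ x, x, hrefl x, rfl⟩
    have hβle : ∀ x w, le x w → β x ≤ ψ w := by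
      intro x w hxw
      exact csInf_le (hbdd x) ⟨w, hxw, rfl⟩
    have hstep : ∀ (x : M) (n : ℕ), ∃ y, le x y ∧ ψ y < β x + 1 / (n + 1) := by
      intro x n
      have hε : (0:ℝ) < 1 / (n + 1) := by positivity
      obtain ⟨r, ⟨y, hy, rfl⟩, hr⟩ := Real.lt_sInf_add_pos (hne x) hε
      exact ⟨y, hy, hr⟩
    let f : ℕ → M := fun n => Nat.rec u (fun n xn => (hstep xn n).choose) n
    have hf : ∀ n, f (n + 1) = (hstep (f n) n).choose := fun n => rfl
    have hchain : ∀ n, le (f n) (f (n + 1)) := fun n => (hstep (f n) n).choose_spec.1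
    have hbnd : ∀ n, ψ (f (n + 1)) < β (f n) + 1 / (n + 1) :=
      fun n => (hstep (f n) n).choose_spec.2
    obtain ⟨v, hv⟩ := hind f hchain
    refine ⟨v, hv 0, ?_⟩
    intro w hvw
    have hfw : ∀ n, le (f n) w := fun n => htrans _ _ _ (hv n) hvw
    have key : ψ v ≤ ψ w := by
      apply le_of_forall_pos_le_add
      intro ε hε
      obtain ⟨n, hn⟩ := exists_nat_one_div_lt hε
      have h1 : ψ v ≤ ψ (f (n + 1)) := psiCU_strictMono.monotone (hdecr _ _ (hv (n + 1)))
      have h2 : β (f n) ≤ ψ w := hβle _ _ (hfw n)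
      have := hbnd n
      have : ψ v < ψ w + 1 / (n + 1) := by
        calc ψ v ≤ ψ (f (n + 1)) := h1
          _ < β (f n) + 1 / (n + 1) := hbnd n
          _ ≤ ψ w + 1 / (n + 1) := by linarith
      linarith
    have key2 : ψ w ≤ ψ v := psiCU_strictMono.monotone (hdecr _ _ hvw)
    exact psiCU_strictMono.injective (le_antisymm key2 key).symm |>.symm
      |>.symm
  · intro z hz y hzy w hyw
    have h1 := hz y hzy
    have h2 := hz w (htrans _ _ _ hzy hyw)
    rw [← h1, ← h2]
end

section
/- Let (M,≤) be a nonempty quasi-ordered set that is sequentially inductive, and let φ : M → ℝ ∪ {+∞} be decreasing and bounded below (inf φ(M) > −∞). Then the set max(M;≤;φ) of (≤,φ)-maximal points is ≤-cofinal and ≤-invariant in M. -/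
/-- (BB-P3): if `(M, le)` is a nonempty sequentially inductive quasi-ordered set and
`φ : M → ℝ ∪ {+∞}` is decreasing and bounded below, then the set of `(le, φ)`-maximal
points is `le`-cofinal and `le`-invariant. -/
theorem stmt_7 {M : Type*} [Nonempty M] (le : M → M → Prop)
    (hrefl : ∀ x, le x x)
    (htrans : ∀ x y z, le x y → le y z → le x z)
    (hind : ∀ x : ℕ → M, (∀ n, le (x n) (x (n + 1))) → ∃ v, ∀ n, le (x n) v)
    (φ : M → EReal)
    (hne_bot : ∀ x, φ x ≠ ⊥)
    (hdecr : ∀ x y, le x y → φ y ≤ φ x)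
    (hbdd : ∃ c : ℝ, ∀ x, (c : EReal) ≤ φ x) :
    (∀ u : M, ∃ v, le u v ∧ ∀ w, le v w → φ v = φ w) ∧
    (∀ z, (∀ w, le z w → φ z = φ w) → ∀ y, le z y → ∀ w, le y w → φ y = φ w) := by
  classical
  -- real-valued surrogate for φ
  set ψ : M → ℝ := fun x => if φ x = ⊤ then 2 else Real.arctan (φ x).toReal with hψ
  have hψ_lt_two : ∀ x, φ x ≠ ⊤ → ψ x < 2 := by
    intro x hx
    simp only [hψ, if_neg hx]
    calc Real.arctan (φ x).toReal < Real.pi / 2 := Real.arctan_lt_pi_div_two _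
      _ < 2 := by linarith [Real.pi_lt_d2]
  have hψdecr : ∀ x y, le x y → ψ y ≤ ψ x := by
    intro x y hxy
    have h := hdecr x y hxy
    by_cases hx : φ x = ⊤
    · simp only [hψ, if_pos hx]
      by_cases hy : φ y = ⊤
      · simp [if_pos hy]
      · exact (hψ_lt_two y hy).le
    · have hy : φ y ≠ ⊤ := fun h' => hx (top_le_iff.mp (h' ▸ h))
      simp only [hψ, if_neg hx, if_neg hy]
      exact Real.arctan_strictMono.monotone
        (EReal.toReal_le_toReal h (hne_bot y) hx)
  have hψinj : ∀ x y, ψ x = ψ y → φ x = φ y := by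
    intro x y h
    by_cases hx : φ x = ⊤ <;> by_cases hy : φ y = ⊤
    · rw [hx, hy]
    · exact absurd (h ▸ (hψ_lt_two y hy)) (by simp [hψ, if_pos hx])
    · exact absurd (h ▸ (hψ_lt_two x hx)) (by simp [hψ, if_pos hy])
    · simp only [hψ, if_neg hx, if_neg hy] at h
      have := Real.arctan_injective h
      rw [← EReal.coe_toReal hx (hne_bot x), ← EReal.coe_toReal hy (hne_bot y), this]
  have hψbdd : ∀ x, (-2 : ℝ) ≤ ψ x := by
    intro x
    by_cases hx : φ x = ⊤
    · simp [hψ, if_pos hx]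
    · simp only [hψ, if_neg hx]
      have := Real.neg_pi_div_two_lt_arctan (φ x).toReal
      linarith [Real.pi_lt_d2]
  constructor
  · -- cofinality
    intro u
    set S : M → Set ℝ := fun x => ψ '' {y | le x y} with hS
    have hSne : ∀ x, (S x).Nonempty := fun x => ⟨ψ x, x, hrefl x, rfl⟩
    have hSbdd : ∀ x, BddBelow (S x) := by
      rintro x
      exact ⟨-2, by rintro _ ⟨y, -, rfl⟩; exact hψbdd y⟩
    have hstep : ∀ (x : M) (n : ℕ), ∃ y, le x y ∧ ψ y < sInf (S x) + 1 / (n + 1) := by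
      intro x n
      obtain ⟨a, ⟨y, hy, rfl⟩, ha⟩ := Real.lt_sInf_add_pos (hSne x)
        (by positivity : (0:ℝ) < 1 / (n + 1))
      exact ⟨y, hy, ha⟩
    set F : M → ℕ → M := fun x n => (hstep x n).choose with hF
    set x : ℕ → M := fun n => Nat.rec u (fun n xn => F xn n) n with hx
    have hchain : ∀ n, le (x n) (x (n + 1)) := fun n => (hstep (x n) n).choose_spec.1
    have hclose : ∀ n, ψ (x (n + 1)) < sInf (S (x n)) + 1 / (n + 1) :=
      fun n => (hstep (x n) n).choose_spec.2
    obtain ⟨v, hv⟩ := hind x hchain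
    refine ⟨v, hv 0, fun w hw => ?_⟩
    have h1 : ψ w ≤ ψ v := hψdecr v w hw
    have h2 : ψ v ≤ ψ w := by
      refine le_of_forall_pos_le_add fun ε hε => ?_
      obtain ⟨n, hn⟩ := exists_nat_one_div_lt hε
      have hwx : le (x n) w := htrans _ _ _ (hv n) hw
      have hw_mem : ψ w ∈ S (x n) := ⟨w, hwx, rfl⟩
      have h3 : sInf (S (x n)) ≤ ψ w := csInf_le (hSbdd _) hw_mem
      have h4 : ψ v ≤ ψ (x (n + 1)) := hψdecr _ _ (hv (n + 1))
      have := hclose n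
      push_cast at hn ⊢
      linarith
    exact hψinj v w (le_antisymm h2 h1)
  · -- invariance
    intro z hz y hzy w hyw
    rw [← hz y hzy, hz w (htrans _ _ _ hzy hyw)]
end

section
/- Let (M,≤) be a nonempty quasi-ordered set that is sequentially inductive, and let φ : M → [0,+∞] be decreasing (with nonnegative, possibly infinite values). Then the set max(M;≤;φ) of (≤,φ)-maximal points is ≤-cofinal and ≤-invariant in M. -/
/-- (BB-P4): if `(M, le)` is a nonempty sequentially inductive quasi-ordered set and
`φ : M → [0, +∞]` is decreasing, then the set of `(le, φ)`-maximal points is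
`le`-cofinal and `le`-invariant. -/
theorem stmt_8 {M : Type*} [Nonempty M] (le : M → M → Prop)
    (hrefl : ∀ x, le x x)
    (htrans : ∀ x y z, le x y → le y z → le x z)
    (hind : ∀ x : ℕ → M, (∀ n, le (x n) (x (n + 1))) → ∃ v, ∀ n, le (x n) v)
    (φ : M → ENNReal)
    (hdecr : ∀ x y, le x y → φ y ≤ φ x) :
    (∀ u : M, ∃ v, le u v ∧ ∀ w, le v w → φ v = φ w) ∧
    (∀ z, (∀ w, le z w → φ z = φ w) → ∀ y, le z y → ∀ w, le y w → φ y = φ w) := by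
  set β : M → ENNReal := fun x => ⨅ (y : M) (_ : le x y), φ y with hβ
  have hβle : ∀ x y, le x y → β x ≤ φ y := by
    intro x y h
    exact iInf_le_of_le y (iInf_le _ h)
  have key : ∀ (x : M) (n : ℕ), ∃ y, le x y ∧ φ y ≤ β x + (2 : ENNReal)⁻¹ ^ n := by
    intro x n
    by_cases hβtop : β x = ⊤
    · exact ⟨x, hrefl x, by simp [hβtop]⟩
    · by_cases hz : ((2 : ENNReal)⁻¹ ^ n) = 0
      · simp at hz
      · have hlt : β x < β x + (2 : ENNReal)⁻¹ ^ n :=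
          ENNReal.lt_add_right hβtop hz
        rw [hβ] at hlt
        simp only [iInf_lt_iff] at hlt
        obtain ⟨y, hy, hlt⟩ := hlt
        exact ⟨y, hy, hlt.le⟩
  choose g hg1 hg2 using key
  constructor
  · intro u
    let x : ℕ → M := fun n => Nat.rec u (fun n xn => g xn n) n
    have hx : ∀ n, x (n + 1) = g (x n) n := fun n => rfl
    have hxasc : ∀ n, le (x n) (x (n + 1)) := by
      intro n; rw [hx]; exact hg1 _ _
    obtain ⟨v, hv⟩ := hind x hxasc
    refine ⟨v, hv 0, ?_⟩
    intro w hw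
    refine le_antisymm ?_ (hdecr _ _ hw)
    have hstep : ∀ n, φ v ≤ φ w + (2 : ENNReal)⁻¹ ^ n := by
      intro n
      have h1 : φ v ≤ φ (x (n + 1)) := hdecr _ _ (hv (n + 1))
      have h2 : φ (x (n + 1)) ≤ β (x n) + (2 : ENNReal)⁻¹ ^ n := by
        rw [hx]; exact hg2 _ _
      have h3 : β (x n) ≤ φ w := hβle _ _ (htrans _ _ _ (hv n) hw)
      calc φ v ≤ β (x n) + (2 : ENNReal)⁻¹ ^ n := h1.trans h2
        _ ≤ φ w + (2 : ENNReal)⁻¹ ^ n := by gcongr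
    refine ENNReal.le_of_forall_pos_le_add ?_
    intro ε hε _
    obtain ⟨n, hn⟩ := ENNReal.exists_inv_two_pow_lt (by exact_mod_cast hε.ne' : (ε : ENNReal) ≠ 0)
    exact (hstep n).trans (add_le_add le_rfl hn.le)
  · intro z hz y hzy w hyw
    have h1 : φ z = φ y := hz y hzy
    have h2 : φ z = φ w := hz w (htrans _ _ _ hzy hyw)
    rw [← h1, ← h2]
end

section
/- (Gauge Brezis–Browder principle.) Let (M,≤) be a nonempty quasi-ordered set that is sequentially inductive, and let Φ = (φ_i; i ≥ 0) be a sequence of functions φ_i : M → ℝ, each decreasing and bounded below. Then the set max(M;≤;Φ) of (≤,Φ)-maximal points is ≤-cofinal in M (for each u ∈ M there exists a (≤,Φ)-maximal v with u ≤ v) and ≤-invariant in M (if u is (≤,Φ)-maximal and u ≤ v then v is (≤,Φ)-maximal). -/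
open Real

/-- Gauge Brezis–Browder principle (BBg): if `(M, le)` is a nonempty sequentially inductive
quasi-ordered set and `Φ = (φ i)` is a sequence of decreasing, bounded below real functions,
then the set of `(le, Φ)`-maximal points is `le`-cofinal and `le`-invariant. -/
theorem stmt_10 {M : Type*} [Nonempty M] (le : M → M → Prop)
    (hrefl : ∀ x, le x x)
    (htrans : ∀ x y z, le x y → le y z → le x z)
    (hind : ∀ x : ℕ → M, (∀ n, le (x n) (x (n + 1))) → ∃ v, ∀ n, le (x n) v)
    (φ : ℕ → M → ℝ)
    (hdecr : ∀ i, ∀ x y, le x y → φ i y ≤ φ i x)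
    (hbdd : ∀ i, ∃ c : ℝ, ∀ x, c ≤ φ i x) :
    (∀ u : M, ∃ v, le u v ∧ ∀ i, ∀ w, le v w → φ i v = φ i w) ∧
    (∀ z, (∀ i, ∀ w, le z w → φ i z = φ i w) →
      ∀ y, le z y → ∀ i, ∀ w, le y w → φ i y = φ i w) := by
  classical
  set t : ℕ → M → ℝ := fun i x => (1/2:ℝ)^i * (Real.arctan (φ i x) + π/2) with ht
  have htpos : ∀ i x, 0 < t i x := by
    intro i x
    apply mul_pos (by positivity)
    have := Real.neg_pi_div_two_lt_arctan (φ i x)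
    linarith
  have htsum : ∀ x, Summable (fun i => t i x) := by
    intro x
    refine Summable.of_nonneg_of_le (fun i => (htpos i x).le) (fun i => ?_)
      ((summable_geometric_of_lt_one (r := (1/2:ℝ)) (by norm_num) (by norm_num)).mul_right π)
    apply mul_le_mul_of_nonneg_left ?_ (by positivity)
    have := Real.arctan_lt_pi_div_two (φ i x)
    linarith
  set ψ : M → ℝ := fun x => ∑' i, t i x with hψ
  have hψmono : ∀ x y, le x y → ψ y ≤ ψ x := by
    intro x y hxy
    apply Summable.tsum_le_tsum _ (htsum y) (htsum x)
    intro i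
    apply mul_le_mul_of_nonneg_left _ (by positivity)
    have := Real.arctan_strictMono.monotone (hdecr i x y hxy)
    linarith
  have hψnonneg : ∀ x, 0 ≤ ψ x := fun x => tsum_nonneg (fun i => (htpos i x).le)
  -- key: if ψ x = ψ y along le, all gauges agree
  have hkey : ∀ x y, le x y → ψ x = ψ y → ∀ i, φ i x = φ i y := by
    intro x y hxy heq i
    by_contra hne
    have hlt : φ i y < φ i x := lt_of_le_of_ne (hdecr i x y hxy) (fun h => hne h.symm)
    have : ψ y < ψ x := by
      refine Summable.tsum_lt_tsum (i := i) (f := fun j => t j y) (g := fun j => t j x)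
        (fun j => ?_) ?_ (htsum y) (htsum x)
      · apply mul_le_mul_of_nonneg_left _ (by positivity)
        have := Real.arctan_strictMono.monotone (hdecr j x y hxy)
        linarith
      · apply mul_lt_mul_of_pos_left _ (by positivity)
        have := Real.arctan_strictMono hlt
        linarith
    linarith
  constructor
  · intro u
    -- infimum of ψ on the up-set of a
    set S : M → Set ℝ := fun a => ψ '' {w | le a w} with hS
    have hSne : ∀ a, (S a).Nonempty := fun a => ⟨ψ a, a, hrefl a, rfl⟩
    have hSbdd : ∀ a, BddBelow (S a) := by
      intro a
      exact ⟨0, by rintro _ ⟨w, -, rfl⟩; exact hψnonneg w⟩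
    have hstep : ∀ (n : ℕ) (a : M), ∃ b, le a b ∧ ψ b < sInf (S a) + (1/2:ℝ)^n := by
      intro n a
      have : sInf (S a) < sInf (S a) + (1/2:ℝ)^n := by
        have : (0:ℝ) < (1/2:ℝ)^n := by positivity
        linarith
      obtain ⟨r, hr, hrlt⟩ := exists_lt_of_csInf_lt (hSne a) this
      obtain ⟨b, hb, rfl⟩ := hr
      exact ⟨b, hb, hrlt⟩
    choose step hstep1 hstep2 using hstep
    -- build the ascending sequence
    let x : ℕ → M := fun n => Nat.rec u (fun n a => step n a) n
    have hxsucc : ∀ n, x (n+1) = step n (x n) := fun n => rfl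
    have hasc : ∀ n, le (x n) (x (n+1)) := fun n => hstep1 n (x n)
    obtain ⟨v, hv⟩ := hind x hasc
    have hux : le u v := hv 0
    refine ⟨v, hux, ?_⟩
    have hψeq : ∀ w, le v w → ψ v = ψ w := by
      intro w hvw
      have h1 : ψ w ≤ ψ v := hψmono v w hvw
      have h2 : ψ v ≤ ψ w := by
        apply le_of_forall_pos_le_add
        intro ε hε
        obtain ⟨n, hn⟩ := exists_pow_lt_of_lt_one hε (by norm_num : (1/2:ℝ) < 1)
        have hxnw : le (x n) w := htrans _ _ _ (hv n) hvw
        have hmem : ψ w ∈ S (x n) := ⟨w, hxnw, rfl⟩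
        have hinf : sInf (S (x n)) ≤ ψ w := csInf_le (hSbdd (x n)) hmem
        have hlt : ψ (x (n+1)) < sInf (S (x n)) + (1/2:ℝ)^n := hstep2 n (x n)
        have hvx : ψ v ≤ ψ (x (n+1)) := hψmono _ _ (hv (n+1))
        linarith
      linarith
    intro i w hvw
    exact hkey v w hvw (hψeq w hvw) i
  · intro z hz y hzy i w hyw
    have h1 := hz i y hzy
    have h2 := hz i w (htrans _ _ _ hzy hyw)
    linarith
end

section
/- (Gauge Cârjă–Ursescu principle.) Let (M,≤) be a nonempty quasi-ordered set that is sequentially inductive, and let Φ = (φ_i; i ≥ 0) be a sequence of functions φ_i : M → ℝ ∪ {−∞,+∞}, each decreasing (no boundedness assumed). Then the set max(M;≤;Φ) of (≤,Φ)-maximal points is ≤-cofinal and ≤-invariant in M. -/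
/-!
Transporting through the order isomorphism `EReal ≃o ℝ≥0∞` reduces a single function to a
decreasing `ψ : M → ℝ≥0∞`. Pick an ascending sequence with `ψ (x (n+1)) ≤ c (x n) + 1/n`,
where `c x` is the infimum of `ψ` over the cone above `x`; at an upper bound `v` of the sequence
and any `w` above `v` we get `ψ v ≤ ψ w + 1/n` for all `n`, so `ψ v = ψ w`. For the whole
sequence `Φ`, climb an ascending chain whose `(i+1)`-st point is maximal for `φ i`; maximality is
inherited upwards, so an upper bound of the chain is maximal for every `φ i`.
-/

open scoped ENNReal

section GaugeMaximal

variable {M α : Type*} {le : M → M → Prop}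

def IsMaximalFor (le : M → M → Prop) (φ : M → α) (z : M) : Prop :=
  ∀ w, le z w → φ z = φ w

def SequentiallyInductive (le : M → M → Prop) : Prop :=
  ∀ x : ℕ → M, (∀ n, le (x n) (x (n + 1))) → ∃ v, ∀ n, le (x n) v

theorem IsMaximalFor.of_le (htrans : ∀ x y z, le x y → le y z → le x z) {φ : M → α} {z y : M}
    (hz : IsMaximalFor le φ z) (hzy : le z y) : IsMaximalFor le φ y := fun w hyw =>
  (hz y hzy).symm.trans (hz w (htrans _ _ _ hzy hyw))

theorem IsMaximalFor.of_comp {β : Type*} {g : α → β} (hg : Function.Injective g) {φ : M → α}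
    {z : M} (hz : IsMaximalFor le (g ∘ φ) z) : IsMaximalFor le φ z := fun w hw =>
  hg (hz w hw)

theorem exists_seq_of_forall_exists {R : ℕ → M → M → Prop} (h : ∀ n x, ∃ y, R n x y) (u : M) :
    ∃ x : ℕ → M, x 0 = u ∧ ∀ n, R n (x n) (x (n + 1)) := by
  choose f hf using h
  exact ⟨fun n => Nat.rec u f n, rfl, fun n => hf n _⟩

theorem exists_le_apply_le_iInf_add (hrefl : ∀ x, le x x) (ψ : M → ℝ≥0∞) (x : M) {ε : ℝ≥0∞}
    (hε : ε ≠ 0) : ∃ y, le x y ∧ ψ y ≤ (⨅ w : {w // le x w}, ψ w) + ε := by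
  by_cases htop : (⨅ w : {w // le x w}, ψ w) = ∞
  · exact ⟨x, hrefl x, by simp [htop]⟩
  · obtain ⟨⟨y, hxy⟩, hy⟩ := iInf_lt_iff.mp (ENNReal.lt_add_right htop hε)
    exact ⟨y, hxy, hy.le⟩

theorem exists_le_isMaximalFor_of_ennreal (hrefl : ∀ x, le x x)
    (htrans : ∀ x y z, le x y → le y z → le x z) (hind : SequentiallyInductive le)
    (ψ : M → ℝ≥0∞) (hψ : ∀ x y, le x y → ψ y ≤ ψ x) (u : M) :
    ∃ v, le u v ∧ IsMaximalFor le ψ v := by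
  set c : M → ℝ≥0∞ := fun x => ⨅ w : {w // le x w}, ψ w
  obtain ⟨x, rfl, hx⟩ := exists_seq_of_forall_exists
    (R := fun n x y => le x y ∧ ψ y ≤ c x + (n : ℝ≥0∞)⁻¹)
    (fun n x => exists_le_apply_le_iInf_add hrefl ψ x (by simp)) u
  obtain ⟨v, hv⟩ := hind x fun n => (hx n).1
  refine ⟨v, hv 0, fun w hvw => le_antisymm ?_ (hψ v w hvw)⟩
  have hclose : ∀ n : ℕ, ψ v ≤ ψ w + (n : ℝ≥0∞)⁻¹ := fun n =>
    calc ψ v ≤ ψ (x (n + 1)) := hψ _ _ (hv (n + 1))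
      _ ≤ c (x n) + (n : ℝ≥0∞)⁻¹ := (hx n).2
      _ ≤ ψ w + (n : ℝ≥0∞)⁻¹ := by
        gcongr
        exact iInf_le (fun w : {w // le (x n) w} => ψ w) ⟨w, htrans _ _ _ (hv n) hvw⟩
  exact ge_of_tendsto' (by simpa using tendsto_const_nhds.add ENNReal.tendsto_inv_nat_nhds_zero)
    hclose

theorem exists_le_isMaximalFor_of_ereal (hrefl : ∀ x, le x x)
    (htrans : ∀ x y z, le x y → le y z → le x z) (hind : SequentiallyInductive le)
    (φ : M → EReal) (hφ : ∀ x y, le x y → φ y ≤ φ x) (u : M) :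
    ∃ v, le u v ∧ IsMaximalFor le φ v := by
  obtain ⟨v, huv, hv⟩ := exists_le_isMaximalFor_of_ennreal hrefl htrans hind
    (EReal.expOrderIso ∘ φ) (fun x y h => EReal.expOrderIso.monotone (hφ x y h)) u
  exact ⟨v, huv, hv.of_comp EReal.expOrderIso.injective⟩

theorem exists_le_forall_isMaximalFor (htrans : ∀ x y z, le x y → le y z → le x z)
    (hind : SequentiallyInductive le) (φ : ℕ → M → α)
    (h : ∀ i u, ∃ v, le u v ∧ IsMaximalFor le (φ i) v) (u : M) :
    ∃ v, le u v ∧ ∀ i, IsMaximalFor le (φ i) v := by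
  obtain ⟨x, rfl, hx⟩ := exists_seq_of_forall_exists
    (R := fun i x y => le x y ∧ IsMaximalFor le (φ i) y) (fun i => h i) u
  obtain ⟨v, hv⟩ := hind x fun n => (hx n).1
  exact ⟨v, hv 0, fun i => (hx i).2.of_le htrans (hv (i + 1))⟩

end GaugeMaximal

theorem stmt_11_general {M : Type*} (le : M → M → Prop)
    (hrefl : ∀ x, le x x)
    (htrans : ∀ x y z, le x y → le y z → le x z)
    (hind : ∀ x : ℕ → M, (∀ n, le (x n) (x (n + 1))) → ∃ v, ∀ n, le (x n) v)
    (φ : ℕ → M → EReal)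
    (hdecr : ∀ i, ∀ x y, le x y → φ i y ≤ φ i x) :
    (∀ u : M, ∃ v, le u v ∧ ∀ i, ∀ w, le v w → φ i v = φ i w) ∧
    (∀ z, (∀ i, ∀ w, le z w → φ i z = φ i w) →
      ∀ y, le z y → ∀ i, ∀ w, le y w → φ i y = φ i w) :=
  ⟨exists_le_forall_isMaximalFor htrans hind φ fun i =>
      exists_le_isMaximalFor_of_ereal hrefl htrans hind (φ i) (hdecr i),
    fun _ hz _ hzy i => IsMaximalFor.of_le htrans (hz i) hzy⟩

/-- Gauge Cârjă–Ursescu principle (CUg): if `(M, le)` is a nonempty sequentially inductive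
quasi-ordered set and `Φ = (φ i)` is a sequence of decreasing extended-real-valued functions,
then the set of `(le, Φ)`-maximal points is `le`-cofinal and `le`-invariant. -/
theorem stmt_11 {M : Type*} [Nonempty M] (le : M → M → Prop)
    (hrefl : ∀ x, le x x)
    (htrans : ∀ x y z, le x y → le y z → le x z)
    (hind : ∀ x : ℕ → M, (∀ n, le (x n) (x (n + 1))) → ∃ v, ∀ n, le (x n) v)
    (φ : ℕ → M → EReal)
    (hdecr : ∀ i, ∀ x y, le x y → φ i y ≤ φ i x) :
    (∀ u : M, ∃ v, le u v ∧ ∀ i, ∀ w, le v w → φ i v = φ i w) ∧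
    (∀ z, (∀ i, ∀ w, le z w → φ i z = φ i w) →
      ∀ y, le z y → ∀ i, ∀ w, le y w → φ i y = φ i w) :=
  stmt_11_general le hrefl htrans hind φ hdecr
end

section
/- (Quasi-ordered gauge variational principle.) Let (X;≤;D) be a strongly complete quasi-ordered gauge space, where D = (d_i; i ≥ 0) is a sufficient countable family of semimetrics on X, and let Φ = (φ_i; i ≥ 0) be a sequence of functions φ_i : X → ℝ ∪ {+∞} such that: Dom(Φ) := {x : φ_i(x) < +∞ for all i} is nonempty; each φ_i is bounded below (inf φ_i(X) > −∞); and each φ_i is descending (≤,D)-lsc. Then for each u ∈ Dom(Φ) there exists v ∈ Dom(Φ) such that: (i) u ≤ v and d_i(u,v) ≤ φ_i(u) − φ_i(v) for all i ≥ 0; and (ii) for every x ∈ X with v ≤ x and x ≠ v there exists an index i with d_i(v,x) + φ_i(x) > φ_i(v) (in the extended reals). -/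
/-- Quasi-ordered gauge variational principle: on a strongly complete quasi-ordered gauge
space `(X; le; D)` with a sufficient countable family of semimetrics `D = (d i)`, for any
sequence `Φ = (φ i)` of bounded below, descending `(le, D)`-lsc functions with values in
`ℝ ∪ {+∞}` and nonempty common domain, each `u ∈ Dom(Φ)` admits a point `v ∈ Dom(Φ)` with
`u ≤ v`, `d i (u, v) ≤ φ i u − φ i v` for all `i`, and such that every `x ≠ v` with `v ≤ x`
satisfies `d i (v, x) + φ i x > φ i v` for some `i`. -/
theorem stmt_13 {X : Type*} (le : X → X → Prop)
    (hrefl : ∀ x, le x x)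
    (htrans : ∀ x y z, le x y → le y z → le x z)
    (d : ℕ → X → X → ℝ)
    (hd_nonneg : ∀ i x y, 0 ≤ d i x y)
    (hd_refl : ∀ i x, d i x x = 0)
    (hd_symm : ∀ i x y, d i x y = d i y x)
    (hd_tri : ∀ i x y z, d i x z ≤ d i x y + d i y z)
    (hsuff : ∀ x y, (∀ i, d i x y = 0) → x = y)
    (hcomplete : ∀ x : ℕ → X, (∀ n, le (x n) (x (n + 1))) →
      (∀ i, ∀ ε > (0 : ℝ), ∃ N, ∀ m ≥ N, ∀ n ≥ N, d i (x m) (x n) < ε) →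
      ∃ v, ∀ i, Filter.Tendsto (fun n => d i (x n) v) Filter.atTop (nhds 0))
    (hselfClosed : ∀ x : ℕ → X, (∀ n, le (x n) (x (n + 1))) → ∀ v,
      (∀ i, Filter.Tendsto (fun n => d i (x n) v) Filter.atTop (nhds 0)) →
      ∀ n, le (x n) v)
    (φ : ℕ → X → EReal)
    (hne_bot : ∀ i x, φ i x ≠ ⊥)
    (hdom : ∃ x, ∀ i, φ i x ≠ ⊤)
    (hbdd : ∀ i, ∃ c : ℝ, ∀ x, (c : EReal) ≤ φ i x)
    (hlsc : ∀ i, ∀ x : ℕ → X, ∀ l : X, (∀ n, le (x n) (x (n + 1))) →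
      (∀ j, Filter.Tendsto (fun n => d j (x n) l) Filter.atTop (nhds 0)) →
      (∀ n, le (x n) l) →
      (∀ n, φ i (x (n + 1)) ≤ φ i (x n)) →
      ∀ n, φ i l ≤ φ i (x n)) :
    ∀ u, (∀ i, φ i u ≠ ⊤) →
      ∃ v, (∀ i, φ i v ≠ ⊤) ∧ le u v ∧
        (∀ i, (d i u v : EReal) ≤ φ i u - φ i v) ∧
        (∀ x, le v x → x ≠ v → ∃ i, φ i v < (d i v x : EReal) + φ i x) := by
    classical
  intro u hu
  set ψ : ℕ → X → ℝ := fun i x => (φ i x).toReal with hψdef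
  have hcoe : ∀ i x, (∀ j, φ j x ≠ ⊤) → ((ψ i x : ℝ) : EReal) = φ i x :=
    fun i x hx => EReal.coe_toReal (hx i) (hne_bot i x)
  obtain ⟨c, hc⟩ : ∃ c : ℕ → ℝ, ∀ i x, (∀ j, φ j x ≠ ⊤) → c i ≤ ψ i x := by
    choose c hc using hbdd
    refine ⟨c, fun i x hx => ?_⟩
    have := EReal.toReal_le_toReal (hc i x) (EReal.coe_ne_bot _) (hx i)
    simpa using this
  -- the Brøndsted-type order
  set R : X → X → Prop := fun x y =>
    (∀ j, φ j x ≠ ⊤) ∧ (∀ j, φ j y ≠ ⊤) ∧ le x y ∧ ∀ i, d i x y ≤ ψ i x - ψ i y with hRdef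
  have hRrefl : ∀ x, (∀ j, φ j x ≠ ⊤) → R x x := by
    intro x hx
    exact ⟨hx, hx, hrefl x, fun i => by rw [hd_refl]; linarith⟩
  have hRtrans : ∀ x y z, R x y → R y z → R x z := by
    rintro x y z ⟨hx, hy, hxy, h1⟩ ⟨_, hz, hyz, h2⟩
    refine ⟨hx, hz, htrans _ _ _ hxy hyz, fun i => ?_⟩
    have := hd_tri i x y z
    have := h1 i; have := h2 i; linarith
  -- existence of near-minimizers
  have key : ∀ x, ∀ n : ℕ, ∃ y, ((∀ j, φ j x ≠ ⊤) →
      R x y ∧ ψ (Nat.unpair n).1 y ≤ sInf (ψ (Nat.unpair n).1 '' {z | R x z}) + 1 / ((n : ℝ) + 1)) := by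
    intro x n
    by_cases hx : ∀ j, φ j x ≠ ⊤
    · have hne : (ψ (Nat.unpair n).1 '' {z | R x z}).Nonempty :=
        ⟨ψ (Nat.unpair n).1 x, x, hRrefl x hx, rfl⟩
      have hpos : (0 : ℝ) < 1 / ((n : ℝ) + 1) := by positivity
      obtain ⟨a, ⟨y, hy, rfl⟩, ha⟩ := Real.lt_sInf_add_pos hne hpos
      exact ⟨y, fun _ => ⟨hy, ha.le⟩⟩
    · exact ⟨x, fun h => absurd h hx⟩
  choose F hF using key
  obtain ⟨seq, hseq0, hseqS⟩ : ∃ seq : ℕ → X, seq 0 = u ∧ ∀ n, seq (n + 1) = F (seq n) n :=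
    ⟨fun n => Nat.rec u (fun n x => F x n) n, rfl, fun n => rfl⟩
  have hdomseq : ∀ n, ∀ j, φ j (seq n) ≠ ⊤ := by
    intro n
    induction n with
    | zero => simpa [hseq0] using hu
    | succ n ih =>
      rw [hseqS]
      exact ((hF (seq n) n ih).1).2.1
  have hRn : ∀ n, R (seq n) (seq (n + 1)) := by
    intro n; rw [hseqS]; exact (hF (seq n) n (hdomseq n)).1
  have hnear : ∀ n, ψ (Nat.unpair n).1 (seq (n + 1)) ≤
      sInf (ψ (Nat.unpair n).1 '' {z | R (seq n) z}) + 1 / ((n : ℝ) + 1) := by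
    intro n; rw [hseqS]; exact (hF (seq n) n (hdomseq n)).2
  have hasc : ∀ n, le (seq n) (seq (n + 1)) := fun n => (hRn n).2.2.1
  have hchain : ∀ m n, m ≤ n → R (seq m) (seq n) := by
    intro m n h
    induction n, h using Nat.le_induction with
    | base => exact hRrefl _ (hdomseq m)
    | succ n hmn ih => exact hRtrans _ _ _ ih (hRn n)
  have hanti : ∀ i, Antitone fun n => ψ i (seq n) := by
    intro i
    apply antitone_nat_of_succ_le
    intro n
    have h1 := (hRn n).2.2.2 i
    have h2 := hd_nonneg i (seq n) (seq (n + 1))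
    linarith
  have hbd : ∀ i, BddBelow (Set.range fun n => ψ i (seq n)) := by
    intro i
    refine ⟨c i, ?_⟩
    rintro _ ⟨n, rfl⟩
    exact hc i _ (hdomseq n)
  set A : ℕ → ℝ := fun i => ⨅ n, ψ i (seq n) with hAdef
  have hA_le : ∀ i n, A i ≤ ψ i (seq n) := fun i n => ciInf_le (hbd i) n
  have htendA : ∀ i, Filter.Tendsto (fun n => ψ i (seq n)) Filter.atTop (nhds (A i)) :=
    fun i => tendsto_atTop_ciInf (hanti i) (hbd i)
  -- Cauchy
  have hCauchy : ∀ i, ∀ ε > (0 : ℝ), ∃ N, ∀ m ≥ N, ∀ n ≥ N, d i (seq m) (seq n) < ε := by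
    intro i ε hε
    obtain ⟨N, hN⟩ : ∃ N, ψ i (seq N) < A i + ε :=
      exists_lt_of_ciInf_lt (by linarith : A i < A i + ε)
    refine ⟨N, fun m hm n hn => ?_⟩
    have key2 : ∀ p q, N ≤ p → p ≤ q → d i (seq p) (seq q) < ε := by
      intro p q hp hpq
      have h1 := (hchain p q hpq).2.2.2 i
      have h2 := hanti i hp
      have h3 := hA_le i q
      simp only at h1 h2 h3 ⊢
      linarith
    rcases le_total m n with h | h
    · exact key2 m n hm h
    · rw [hd_symm]; exact key2 n m hn h
  obtain ⟨v, hv⟩ := hcomplete seq hasc hCauchy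
  have hub := hselfClosed seq hasc v hv
  have hφanti : ∀ i n, φ i (seq (n + 1)) ≤ φ i (seq n) := by
    intro i n
    rw [← hcoe i _ (hdomseq (n + 1)), ← hcoe i _ (hdomseq n)]
    exact_mod_cast hanti i (Nat.le_succ n)
  have hφv : ∀ i n, φ i v ≤ φ i (seq n) :=
    fun i => hlsc i seq v hasc hv hub (hφanti i)
  have hvdom : ∀ j, φ j v ≠ ⊤ := fun j => ne_top_of_le_ne_top (hdomseq 0 j) (hφv j 0)
  have hψv : ∀ i n, ψ i v ≤ ψ i (seq n) :=
    fun i n => EReal.toReal_le_toReal (hφv i n) (hne_bot i v) (hdomseq n i)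
  have hψvA : ∀ i, ψ i v ≤ A i := fun i => le_ciInf (hψv i)
  have hRv : ∀ n, R (seq n) v := by
    intro n
    refine ⟨hdomseq n, hvdom, hub n, fun i => ?_⟩
    have hten : Filter.Tendsto (fun m => ψ i (seq n) - ψ i (seq m) + d i (seq m) v)
        Filter.atTop (nhds (ψ i (seq n) - A i + 0)) :=
      (Filter.Tendsto.sub tendsto_const_nhds (htendA i)).add (hv i)
    have hle : d i (seq n) v ≤ ψ i (seq n) - A i + 0 := by
      refine ge_of_tendsto hten (Filter.eventually_atTop.2 ⟨n, fun m hm => ?_⟩)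
      have h1 := hd_tri i (seq n) (seq m) v
      have h2 := (hchain n m hm).2.2.2 i
      linarith
    have := hψvA i
    linarith
  refine ⟨v, hvdom, ?_, ?_, ?_⟩
  · have := (hRv 0).2.2.1; rwa [hseq0] at this
  · intro i
    have h := (hRv 0).2.2.2 i
    rw [hseq0] at h
    calc (d i u v : EReal) ≤ ((ψ i u - ψ i v : ℝ) : EReal) := EReal.coe_le_coe_iff.2 h
      _ = φ i u - φ i v := by rw [EReal.coe_sub, hcoe i u hu, hcoe i v hvdom]
  · intro x hvx hxv
    by_contra hcon
    push_neg at hcon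
    have hxdom : ∀ j, φ j x ≠ ⊤ := by
      intro j hj
      have h := hcon j
      rw [hj, EReal.add_top_of_ne_bot (EReal.coe_ne_bot _)] at h
      exact hvdom j (top_le_iff.1 h)
    have hRvx : R v x := by
      refine ⟨hvdom, hxdom, hvx, fun i => ?_⟩
      have h := hcon i
      rw [← hcoe i x hxdom, ← hcoe i v hvdom, ← EReal.coe_add, EReal.coe_le_coe_iff] at h
      linarith
    have hAx : ∀ i, A i ≤ ψ i x := by
      intro i
      by_contra hlt
      push_neg at hlt
      obtain ⟨k, hk⟩ := exists_nat_one_div_lt (by linarith : (0 : ℝ) < A i - ψ i x)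
      set n := Nat.pair i k with hn
      have hun : (Nat.unpair n).1 = i := by simp [hn]
      have hx_mem : ψ i x ∈ ψ i '' {z | R (seq n) z} :=
        ⟨x, hRtrans _ _ _ (hRv n) hRvx, rfl⟩
      have hbdd' : BddBelow (ψ i '' {z | R (seq n) z}) := by
        refine ⟨c i, ?_⟩
        rintro _ ⟨z, hz, rfl⟩
        exact hc i z hz.2.1
      have h1 := hnear n
      rw [hun] at h1
      have h2 : sInf (ψ i '' {z | R (seq n) z}) ≤ ψ i x := csInf_le hbdd' hx_mem
      have h3 : 1 / ((n : ℝ) + 1) ≤ 1 / ((k : ℝ) + 1) := by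
        apply one_div_le_one_div_of_le (by positivity)
        have := Nat.right_le_pair i k
        have : (k : ℝ) ≤ (n : ℝ) := by exact_mod_cast this
        linarith
      have h4 := hA_le i (n + 1)
      linarith
    have hzero : ∀ i, d i v x = 0 := by
      intro i
      have h1 := hRvx.2.2.2 i
      have h2 := hψvA i
      have h3 := hAx i
      have h4 := hd_nonneg i v x
      linarith
    exact hxv (hsuff v x hzero).symm
end

section
/- (Gauge variational principle.) Let (X,D) be a complete gauge space, where D = (d_i; i ≥ 0) is a sufficient countable family of semimetrics on X, and let Φ = (φ_i; i ≥ 0) be a sequence of functions φ_i : X → ℝ ∪ {+∞} such that: Dom(Φ) := {x : φ_i(x) < +∞ for all i} is nonempty; each φ_i is bounded below (inf φ_i(X) > −∞); and each φ_i is descending D-lsc. Then for each u ∈ Dom(Φ) there exists v ∈ Dom(Φ) such that: (i) d_i(u,v) ≤ φ_i(u) − φ_i(v) for all i ≥ 0; and (ii) for every x ∈ X with x ≠ v there exists an index i with d_i(v,x) + φ_i(x) > φ_i(v) (in the extended reals). -/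
/-!
On the common domain `Dom(Φ)`, with `fᵢ = φᵢ` read as real numbers, the Brøndsted order
`a ≼ b ↔ ∀ i, dᵢ(a, b) + fᵢ(b) ≤ fᵢ(a)` is a preorder along which every `fᵢ` decreases.
Along a `≼`-chain each `fᵢ` converges, so the chain is `dᵢ`-Cauchy for every `i`; its limit
lies above the chain by the descending lower semicontinuity. The Brezis–Browder principle then
yields `v ≽ u` on whose upper cone every `fᵢ` is constant, and `w ≽ v` forces `dᵢ(v, w) = 0`
for all `i`, hence `w = v`.
-/

open Filter Topology Set

theorem exists_le_forall_le_lt_add {α : Type*} [Preorder α] {g : α → ℝ}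
    (hg : BddBelow (range g)) (a : α) {ε : ℝ} (hε : 0 < ε) :
    ∃ b, a ≤ b ∧ ∀ w, a ≤ w → g b < g w + ε := by
  obtain ⟨_, ⟨b, hab, rfl⟩, hb⟩ :=
    Real.lt_sInf_add_pos (s := g '' Ici a) ⟨g a, a, le_rfl, rfl⟩ hε
  refine ⟨b, hab, fun w haw => hb.trans_le (add_le_add_left ?_ _)⟩
  exact csInf_le (hg.mono (image_subset_range _ _)) ⟨w, haw, rfl⟩

theorem exists_le_forall_le_apply_eq {α : Type*} [Preorder α] (f : ℕ → α → ℝ)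
    (hf : ∀ i, Antitone (f i)) (hbdd : ∀ i, BddBelow (range (f i)))
    (hchain : ∀ s : ℕ → α, Monotone s → ∃ v, ∀ n, s n ≤ v) (u : α) :
    ∃ v, u ≤ v ∧ ∀ w, v ≤ w → ∀ i, f i w = f i v := by
  -- Step `n` nearly minimises `f i`, `i = n.unpair.1`, over the upper cone of the current
  -- point; every index recurs at steps `Nat.pair i k` with tolerance at most `1 / (k + 1)`.
  have step : ∀ (n : ℕ) (a : α), ∃ b, a ≤ b ∧
      ∀ w, a ≤ w → f n.unpair.1 b < f n.unpair.1 w + 1 / (n + 1) :=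
    fun n a => exists_le_forall_le_lt_add (hbdd _) a (by positivity)
  choose next hle hlt using step
  let s : ℕ → α := fun n => Nat.rec u next n
  obtain ⟨v, hv⟩ := hchain s (monotone_nat_of_le_succ fun n => hle n (s n))
  refine ⟨v, hv 0, fun w hvw i => le_antisymm (hf i hvw) (le_of_forall_pos_lt_add fun ε hε => ?_)⟩
  obtain ⟨k, hk⟩ := exists_nat_one_div_lt hε
  set n := Nat.pair i k
  have hi : n.unpair.1 = i := by simp [n]
  have hnk : 1 / ((n : ℝ) + 1) ≤ 1 / (k + 1) := by
    gcongr
    exact_mod_cast Nat.right_le_pair i k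
  calc f i v ≤ f i (s (n + 1)) := hf i (hv (n + 1))
    _ < f i w + 1 / (n + 1) := hi ▸ hlt n (s n) w ((hv n).trans hvw)
    _ < f i w + ε := by linarith

section Semimetric

variable {X : Type*} {d : X → X → ℝ}

theorem nonneg_of_triangle (hd_refl : ∀ x, d x x = 0) (hd_symm : ∀ x y, d x y = d y x)
    (hd_tri : ∀ x y z, d x z ≤ d x y + d y z) (x y : X) : 0 ≤ d x y := by
  linarith [hd_tri x y x, hd_refl x, hd_symm x y]

theorem cauchy_of_le_sub (hd_symm : ∀ x y, d x y = d y x) {s : ℕ → X} {a : ℕ → ℝ}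
    (ha : CauchySeq a) (hsa : ∀ m n, m ≤ n → d (s m) (s n) ≤ a m - a n) :
    ∀ ε > 0, ∃ N, ∀ m ≥ N, ∀ n ≥ N, d (s m) (s n) < ε := by
  intro ε hε
  obtain ⟨N, hN⟩ := Metric.cauchySeq_iff.1 ha ε hε
  refine ⟨N, fun m hm n hn => ?_⟩
  have hmn := hN m hm n hn
  rw [Real.dist_eq] at hmn
  rcases le_total m n with h | h
  · linarith [hsa m n h, le_abs_self (a m - a n)]
  · rw [hd_symm]
    linarith [hsa n m h, neg_abs_le (a m - a n)]

theorem le_sub_of_tendsto (hd_tri : ∀ x y z, d x z ≤ d x y + d y z) {s : ℕ → X} {a : ℕ → ℝ}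
    {L : ℝ} {v : X} (ha : Tendsto a atTop (𝓝 L))
    (hsa : ∀ m n, m ≤ n → d (s m) (s n) ≤ a m - a n)
    (hv : Tendsto (fun n => d (s n) v) atTop (𝓝 0)) (n : ℕ) : d (s n) v ≤ a n - L := by
  have hlim : Tendsto (fun m => a n - a m + d (s m) v) atTop (𝓝 (a n - L)) := by
    simpa using (tendsto_const_nhds.sub ha).add hv
  refine ge_of_tendsto hlim ?_
  filter_upwards [eventually_ge_atTop n] with m hm
  linarith [hd_tri (s n) (s m) v, hsa n m hm]

end Semimetric

abbrev brondstedPreorder {α : Type*} (d : ℕ → α → α → ℝ) (f : ℕ → α → ℝ)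
    (hd_refl : ∀ i x, d i x x = 0) (hd_tri : ∀ i x y z, d i x z ≤ d i x y + d i y z) :
    Preorder α where
  le a b := ∀ i, d i a b + f i b ≤ f i a
  le_refl a i := by simp [hd_refl]
  le_trans a b c hab hbc i := by linarith [hab i, hbc i, hd_tri i a b c]

theorem exists_upper_bound_of_brondsted_chain {X : Type*} {d : ℕ → X → X → ℝ}
    (hd_refl : ∀ i x, d i x x = 0) (hd_symm : ∀ i x y, d i x y = d i y x)
    (hd_tri : ∀ i x y z, d i x z ≤ d i x y + d i y z)
    (hcomplete : ∀ x : ℕ → X,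
      (∀ i, ∀ ε > (0 : ℝ), ∃ N, ∀ m ≥ N, ∀ n ≥ N, d i (x m) (x n) < ε) →
      ∃ v, ∀ i, Tendsto (fun n => d i (x n) v) atTop (𝓝 0))
    {φ : ℕ → X → EReal} (hne_bot : ∀ i x, φ i x ≠ ⊥)
    (hlsc : ∀ i, ∀ x : ℕ → X, ∀ l : X,
      (∀ j, Tendsto (fun n => d j (x n) l) atTop (𝓝 0)) →
      (∀ n, φ i (x (n + 1)) ≤ φ i (x n)) → ∀ n, φ i l ≤ φ i (x n))
    {s : ℕ → X} (hs : ∀ n i, φ i (s n) ≠ ⊤)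
    (hbdd : ∀ i, BddBelow (range fun n => (φ i (s n)).toReal))
    (hchain : ∀ m n, m ≤ n → ∀ i, d i (s m) (s n) + (φ i (s n)).toReal ≤ (φ i (s m)).toReal) :
    ∃ v, (∀ i, φ i v ≠ ⊤) ∧ ∀ n i, d i (s n) v + (φ i v).toReal ≤ (φ i (s n)).toReal := by
  set a : ℕ → ℕ → ℝ := fun i n => (φ i (s n)).toReal
  have hsa : ∀ i m n, m ≤ n → d i (s m) (s n) ≤ a i m - a i n := fun i m n h => by
    linarith [hchain m n h i]
  have ha_anti : ∀ i, Antitone (a i) := fun i m n h => by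
    linarith [hsa i m n h, nonneg_of_triangle (hd_refl i) (hd_symm i) (hd_tri i) (s m) (s n)]
  have ha_lim : ∀ i, Tendsto (a i) atTop (𝓝 (⨅ n, a i n)) :=
    fun i => tendsto_atTop_ciInf (ha_anti i) (hbdd i)
  obtain ⟨v, hv⟩ := hcomplete s fun i => cauchy_of_le_sub (hd_symm i) (ha_lim i).cauchySeq (hsa i)
  have hv_le : ∀ i n, φ i v ≤ φ i (s n) := by
    refine fun i => hlsc i s v hv fun n => ?_
    rw [← EReal.coe_toReal (hs n i) (hne_bot i _), ← EReal.coe_toReal (hs (n + 1) i) (hne_bot i _)]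
    exact EReal.coe_le_coe_iff.2 (ha_anti i n.le_succ)
  refine ⟨v, fun i => ne_top_of_le_ne_top (hs 0 i) (hv_le i 0), fun n i => ?_⟩
  have hvL : (φ i v).toReal ≤ ⨅ n, a i n :=
    le_ciInf fun m => EReal.toReal_le_toReal (hv_le i m) (hne_bot i v) (hs m i)
  linarith [le_sub_of_tendsto (hd_tri i) (ha_lim i) (hsa i) (hv i) n]

theorem coe_add_le_iff_add_toReal_le {r : ℝ} {x y : EReal} (hx : x ≠ ⊤) (hx' : x ≠ ⊥)
    (hy : y ≠ ⊤) (hy' : y ≠ ⊥) : (r : EReal) + y ≤ x ↔ r + y.toReal ≤ x.toReal := by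
  lift x to ℝ using ⟨hx, hx'⟩
  lift y to ℝ using ⟨hy, hy'⟩
  norm_cast

theorem stmt_14_general {X : Type*} (d : ℕ → X → X → ℝ)
    (hd_refl : ∀ i x, d i x x = 0)
    (hd_symm : ∀ i x y, d i x y = d i y x)
    (hd_tri : ∀ i x y z, d i x z ≤ d i x y + d i y z)
    (hsuff : ∀ x y, (∀ i, d i x y = 0) → x = y)
    (hcomplete : ∀ x : ℕ → X,
      (∀ i, ∀ ε > (0 : ℝ), ∃ N, ∀ m ≥ N, ∀ n ≥ N, d i (x m) (x n) < ε) →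
      ∃ v, ∀ i, Filter.Tendsto (fun n => d i (x n) v) Filter.atTop (nhds 0))
    (φ : ℕ → X → EReal)
    (hbdd : ∀ i, ∃ c : ℝ, ∀ x, (c : EReal) ≤ φ i x)
    (hlsc : ∀ i, ∀ x : ℕ → X, ∀ l : X,
      (∀ j, Filter.Tendsto (fun n => d j (x n) l) Filter.atTop (nhds 0)) →
      (∀ n, φ i (x (n + 1)) ≤ φ i (x n)) →
      ∀ n, φ i l ≤ φ i (x n)) :
    ∀ u, (∀ i, φ i u ≠ ⊤) →
      ∃ v, (∀ i, φ i v ≠ ⊤) ∧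
        (∀ i, (d i u v : EReal) ≤ φ i u - φ i v) ∧
        (∀ x, x ≠ v → ∃ i, φ i v < (d i v x : EReal) + φ i x) := by
  intro u hu
  have hne_bot : ∀ i x, φ i x ≠ ⊥ := fun i x =>
    (hbdd i).elim fun c hc => ne_bot_of_le_ne_bot (EReal.coe_ne_bot c) (hc x)
  have hd_nonneg := fun i => nonneg_of_triangle (hd_refl i) (hd_symm i) (hd_tri i)
  let f : ℕ → {x // ∀ i, φ i x ≠ ⊤} → ℝ := fun i x => (φ i x).toReal
  have hf_bdd : ∀ i, BddBelow (range (f i)) := fun i => (hbdd i).elim fun c hc =>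
    ⟨c, by rintro _ ⟨x, rfl⟩; simpa using EReal.toReal_le_toReal (hc x) (EReal.coe_ne_bot c) (x.2 i)⟩
  let _ := brondstedPreorder (fun i (a b : {x // ∀ i, φ i x ≠ ⊤}) => d i a b) f
    (fun i x => hd_refl i x) (fun i x y z => hd_tri i x y z)
  have hf_anti : ∀ i, Antitone (f i) := fun i a b hab => by linarith [hab i, hd_nonneg i a b]
  have hchain : ∀ s : ℕ → {x // ∀ i, φ i x ≠ ⊤}, Monotone s → ∃ v, ∀ n, s n ≤ v := by
    intro s hs
    obtain ⟨v, hv_top, hv⟩ := exists_upper_bound_of_brondsted_chain hd_refl hd_symm hd_tri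
      hcomplete hne_bot hlsc (fun n => (s n).2)
      (fun i => (hf_bdd i).mono (by rintro _ ⟨n, rfl⟩; exact ⟨s n, rfl⟩)) fun m n h => hs h
    exact ⟨⟨v, hv_top⟩, hv⟩
  obtain ⟨⟨v, hv_top⟩, huv, hv_max⟩ := exists_le_forall_le_apply_eq f hf_anti hf_bdd hchain ⟨u, hu⟩
  refine ⟨v, hv_top, fun i => ?_, fun x hxv => ?_⟩
  · rw [← EReal.coe_toReal (hu i) (hne_bot i u), ← EReal.coe_toReal (hv_top i) (hne_bot i v),
      ← EReal.coe_sub, EReal.coe_le_coe_iff]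
    linarith [huv i]
  by_cases hx : ∀ i, φ i x ≠ ⊤
  · by_contra! hle
    have hvx : (⟨v, hv_top⟩ : {x // ∀ i, φ i x ≠ ⊤}) ≤ ⟨x, hx⟩ := fun i =>
      (coe_add_le_iff_add_toReal_le (hv_top i) (hne_bot i v) (hx i) (hne_bot i x)).1 (hle i)
    refine hxv (hsuff x v fun i => ?_)
    linarith [hvx i, hv_max _ hvx i, hd_nonneg i v x, hd_symm i x v]
  · obtain ⟨i, hi⟩ := not_forall_not.1 hx
    exact ⟨i, by rw [hi, EReal.coe_add_top]; exact (hv_top i).lt_top⟩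

/-- Gauge variational principle (EVPg): on a complete gauge space `(X, D)` with a sufficient
countable family of semimetrics `D = (d i)`, for any sequence `Φ = (φ i)` of bounded below,
descending `D`-lsc functions with values in `ℝ ∪ {+∞}` and nonempty common domain, each
`u ∈ Dom(Φ)` admits a point `v ∈ Dom(Φ)` with `d i (u, v) ≤ φ i u − φ i v` for all `i`, and
such that every `x ≠ v` satisfies `d i (v, x) + φ i x > φ i v` for some `i`. -/
theorem stmt_14 {X : Type*} (d : ℕ → X → X → ℝ)
    (hd_nonneg : ∀ i x y, 0 ≤ d i x y)
    (hd_refl : ∀ i x, d i x x = 0)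
    (hd_symm : ∀ i x y, d i x y = d i y x)
    (hd_tri : ∀ i x y z, d i x z ≤ d i x y + d i y z)
    (hsuff : ∀ x y, (∀ i, d i x y = 0) → x = y)
    (hcomplete : ∀ x : ℕ → X,
      (∀ i, ∀ ε > (0 : ℝ), ∃ N, ∀ m ≥ N, ∀ n ≥ N, d i (x m) (x n) < ε) →
      ∃ v, ∀ i, Filter.Tendsto (fun n => d i (x n) v) Filter.atTop (nhds 0))
    (φ : ℕ → X → EReal)
    (hne_bot : ∀ i x, φ i x ≠ ⊥)
    (hdom : ∃ x, ∀ i, φ i x ≠ ⊤)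
    (hbdd : ∀ i, ∃ c : ℝ, ∀ x, (c : EReal) ≤ φ i x)
    (hlsc : ∀ i, ∀ x : ℕ → X, ∀ l : X,
      (∀ j, Filter.Tendsto (fun n => d j (x n) l) Filter.atTop (nhds 0)) →
      (∀ n, φ i (x (n + 1)) ≤ φ i (x n)) →
      ∀ n, φ i l ≤ φ i (x n)) :
    ∀ u, (∀ i, φ i u ≠ ⊤) →
      ∃ v, (∀ i, φ i v ≠ ⊤) ∧
        (∀ i, (d i u v : EReal) ≤ φ i u - φ i v) ∧
        (∀ x, x ≠ v → ∃ i, φ i v < (d i v x : EReal) + φ i x) :=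
  stmt_14_general d hd_refl hd_symm hd_tri hsuff hcomplete φ hbdd hlsc
end

section
/- (Monotone variational principle.) Let (X;≤;d) be a quasi-ordered metric space that is strongly complete (every ≤-ascending d-Cauchy sequence converges, and the limit of every ascending convergent sequence is an upper bound of it), and let φ : X → ℝ ∪ {+∞} be proper (Dom(φ) := {x : φ(x) < +∞} is nonempty), bounded below, and descending (≤,d)-lsc. Then for each u ∈ Dom(φ) there exists v ∈ Dom(φ) such that: (i) u ≤ v and d(u,v) ≤ φ(u) − φ(v); and (ii) for every x ∈ X with v ≤ x and x ≠ v one has d(v,x) + φ(x) > φ(v) (in the extended reals). -/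
/-!
Ekeland's iteration, run inside the ordered Brøndsted sets
`S x = {y | x ≤ y, d(x, y) ≤ φ x - φ y}`, which are nested along `≤`. Starting from `g 0 = u`,
pick `g (n+1) ∈ S (g n)` whose value is within `2⁻ⁿ` of `inf φ(S (g n))`. The distances telescope
against the decreasing, bounded values `φ (g n)`, so `g` is an ascending Cauchy sequence; its limit
`v` is an upper bound of it and, by descending lower semicontinuity, lies in every `S (g n)`.
Any `x ∈ S v` lies in all of them too, hence `φ v ≤ φ x`, which forces `d(v, x) = 0`.
-/

open Filter Set Topology

structure IsStronglyComplete (X : Type*) [UniformSpace X] [Preorder X] : Prop where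
  exists_tendsto_of_cauchySeq :
    ∀ x : ℕ → X, Monotone x → CauchySeq x → ∃ v, Tendsto x atTop (𝓝 v)
  le_of_tendsto : ∀ x : ℕ → X, Monotone x → ∀ v, Tendsto x atTop (𝓝 v) → ∀ n, x n ≤ v

theorem exists_forall_le_add_of_bddBelow {α : Type*} {s : Set α} {f : α → ℝ} (hs : s.Nonempty)
    (hf : BddBelow (f '' s)) {ε : ℝ} (hε : 0 < ε) : ∃ y ∈ s, ∀ z ∈ s, f y ≤ f z + ε := by
  obtain ⟨_, ⟨y, hy, rfl⟩, hlt⟩ := Real.lt_sInf_add_pos (hs.image f) hε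
  exact ⟨y, hy, fun z hz => hlt.le.trans (by gcongr; exact csInf_le hf (mem_image_of_mem f hz))⟩

theorem cauchySeq_of_dist_le_sub {X : Type*} [PseudoMetricSpace X] {g : ℕ → X} {f : ℕ → ℝ}
    (hf : BddBelow (range f)) (h : ∀ n m, n ≤ m → dist (g n) (g m) ≤ f n - f m) :
    CauchySeq g := by
  have hanti : Antitone f := fun n m hnm => by
    linarith [h n m hnm, dist_nonneg (x := g n) (y := g m)]
  refine cauchySeq_of_le_tendsto_0 (fun N => f N - ⨅ n, f n) (fun n m N hn hm => ?_) ?_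
  · wlog hnm : n ≤ m generalizing n m
    · rw [dist_comm]
      exact this m n hm hn (le_of_not_ge hnm)
    linarith [h n m hnm, hanti hn, ciInf_le hf m]
  · simpa using (tendsto_atTop_ciInf hanti hf).sub_const (⨅ n, f n)

section EkelandSet

variable {X : Type*} [PseudoMetricSpace X] [Preorder X] {D : Set X} {ψ : X → ℝ} {x y z : X}

/-- `D` stands for the effective domain of an extended-real function and `ψ` for its real part. -/
def ekelandSet (D : Set X) (ψ : X → ℝ) (x : X) : Set X :=
  {y | x ≤ y ∧ y ∈ D ∧ dist x y ≤ ψ x - ψ y}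

theorem mem_ekelandSet_self (hx : x ∈ D) : x ∈ ekelandSet D ψ x :=
  ⟨le_rfl, hx, by simp⟩

theorem mem_ekelandSet_trans (hy : y ∈ ekelandSet D ψ x) (hz : z ∈ ekelandSet D ψ y) :
    z ∈ ekelandSet D ψ x :=
  ⟨hy.1.trans hz.1, hz.2.1, (dist_triangle x y z).trans (by linarith [hy.2.2, hz.2.2])⟩

theorem le_of_mem_ekelandSet (hy : y ∈ ekelandSet D ψ x) : ψ y ≤ ψ x := by
  linarith [hy.2.2, dist_nonneg (x := x) (y := y)]

theorem exists_seq_mem_ekelandSet (hbdd : BddBelow (ψ '' D)) {u : X} (hu : u ∈ D) :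
    ∃ g : ℕ → X, g 0 = u ∧ ∀ n, g (n + 1) ∈ ekelandSet D ψ (g n) ∧
      ∀ z ∈ ekelandSet D ψ (g n), ψ (g (n + 1)) ≤ ψ z + (1 / 2) ^ n := by
  have step (n : ℕ) (x : X) (hx : x ∈ D) : ∃ y ∈ ekelandSet D ψ x,
      ∀ z ∈ ekelandSet D ψ x, ψ y ≤ ψ z + (1 / 2) ^ n :=
    exists_forall_le_add_of_bddBelow ⟨x, mem_ekelandSet_self hx⟩
      (hbdd.mono (image_mono fun _ hy => hy.2.1)) (by positivity)
  choose! next hnext_mem hnext_le using step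
  let g : ℕ → X := fun n => Nat.rec u (fun n x => next n x) n
  have hgD : ∀ n, g n ∈ D := by
    intro n
    induction n with
    | zero => exact hu
    | succ n ih => exact (hnext_mem n (g n) ih).2.1
  exact ⟨g, rfl, fun n => ⟨hnext_mem n (g n) (hgD n), hnext_le n (g n) (hgD n)⟩⟩

theorem mem_ekelandSet_of_le {g : ℕ → X} (hg0 : g 0 ∈ D)
    (hg : ∀ n, g (n + 1) ∈ ekelandSet D ψ (g n)) {n m : ℕ} (hnm : n ≤ m) :
    g m ∈ ekelandSet D ψ (g n) := by
  induction m, hnm using Nat.le_induction with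
  | base =>
    refine mem_ekelandSet_self ?_
    cases n with
    | zero => exact hg0
    | succ n => exact (hg n).2.1
  | succ m _ ih => exact mem_ekelandSet_trans ih (hg m)

end EkelandSet

theorem eq_of_mem_ekelandSet_of_le {X : Type*} [MetricSpace X] [Preorder X] {D : Set X}
    {ψ : X → ℝ} {v x : X} (hx : x ∈ ekelandSet D ψ v) (h : ψ v ≤ ψ x) : x = v :=
  (dist_le_zero.mp (by linarith [hx.2.2])).symm

theorem exists_mem_ekelandSet_subset_singleton {X : Type*} [MetricSpace X] [Preorder X]
    (hX : IsStronglyComplete X) {D : Set X} {ψ : X → ℝ} (hbdd : BddBelow (ψ '' D))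
    (hlsc : ∀ x : ℕ → X, ∀ l, Monotone x → (∀ n, x n ∈ D) → Tendsto x atTop (𝓝 l) →
      (∀ n, x n ≤ l) → Antitone (ψ ∘ x) → l ∈ D ∧ ∀ n, ψ l ≤ ψ (x n))
    {u : X} (hu : u ∈ D) : ∃ v ∈ ekelandSet D ψ u, ekelandSet D ψ v ⊆ {v} := by
  obtain ⟨g, rfl, hg⟩ := exists_seq_mem_ekelandSet hbdd hu
  have hchain {n m : ℕ} (hnm : n ≤ m) := mem_ekelandSet_of_le hu (fun k => (hg k).1) hnm
  have hgD (n : ℕ) : g n ∈ D := (hchain le_rfl).2.1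
  have hmono : Monotone g := fun n m hnm => (hchain hnm).1
  have hanti : Antitone (ψ ∘ g) := fun _ _ hnm => le_of_mem_ekelandSet (ψ := ψ) (hchain hnm)
  have hcauchy : CauchySeq g :=
    cauchySeq_of_dist_le_sub (hbdd.mono (range_subset_iff.2 fun n => mem_image_of_mem ψ (hgD n)))
      fun _ _ hnm => (hchain hnm).2.2
  obtain ⟨v, hv⟩ := hX.exists_tendsto_of_cauchySeq g hmono hcauchy
  have hgv := hX.le_of_tendsto g hmono v hv
  obtain ⟨hvD, hψv⟩ := hlsc g v hmono hgD hv hgv hanti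
  have hvS (n : ℕ) : v ∈ ekelandSet D ψ (g n) := by
    refine ⟨hgv n, hvD, le_of_tendsto (tendsto_const_nhds.dist hv) ?_⟩
    filter_upwards [eventually_ge_atTop n] with m hm
    linarith [(hchain hm).2.2, hψv m]
  refine ⟨v, hvS 0, fun x hx => eq_of_mem_ekelandSet_of_le hx ?_⟩
  refine le_of_forall_pos_le_add fun ε hε => ?_
  obtain ⟨n, hn⟩ := exists_pow_lt_of_lt_one hε (by norm_num : (1 / 2 : ℝ) < 1)
  calc ψ v ≤ ψ (g (n + 1)) := hψv (n + 1)
    _ ≤ ψ x + (1 / 2) ^ n := (hg n).2 x (mem_ekelandSet_trans (hvS n) hx)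
    _ ≤ ψ x + ε := by linarith

section EReal

variable {X : Type*} {φ : X → EReal}

theorem bddBelow_toReal_image_of_forall_coe_le {c : ℝ} (hc : ∀ x, (c : EReal) ≤ φ x) :
    BddBelow ((fun x => (φ x).toReal) '' {x | φ x ≠ ⊤}) :=
  ⟨c, by
    rintro _ ⟨x, hx, rfl⟩
    simpa using EReal.toReal_le_toReal (hc x) (EReal.coe_ne_bot c) hx⟩

theorem lsc_toReal_of_lsc [TopologicalSpace X] [Preorder X] (hne_bot : ∀ x, φ x ≠ ⊥)
    (hlsc : ∀ x : ℕ → X, ∀ l, Monotone x → Tendsto x atTop (𝓝 l) → (∀ n, x n ≤ l) →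
      Antitone (φ ∘ x) → ∀ n, φ l ≤ φ (x n))
    (x : ℕ → X) (l : X) (hmono : Monotone x) (hxD : ∀ n, φ (x n) ≠ ⊤)
    (hx : Tendsto x atTop (𝓝 l)) (hxl : ∀ n, x n ≤ l)
    (hanti : Antitone fun n => (φ (x n)).toReal) :
    φ l ≠ ⊤ ∧ ∀ n, (φ l).toReal ≤ (φ (x n)).toReal := by
  have hle := hlsc x l hmono hx hxl fun n m hnm => by
    simpa [EReal.coe_toReal, hxD, hne_bot] using EReal.coe_le_coe_iff.mpr (hanti hnm)
  exact ⟨ne_top_of_le_ne_top (hxD 0) (hle 0),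
    fun n => EReal.toReal_le_toReal (hle n) (hne_bot l) (hxD n)⟩

end EReal

theorem stmt_16_general {X : Type*} [MetricSpace X] (le : X → X → Prop)
    (hrefl : ∀ x, le x x)
    (htrans : ∀ x y z, le x y → le y z → le x z)
    (hcomplete : ∀ x : ℕ → X, (∀ n, le (x n) (x (n + 1))) → CauchySeq x →
      ∃ v, Filter.Tendsto x Filter.atTop (nhds v))
    (hselfClosed : ∀ x : ℕ → X, (∀ n, le (x n) (x (n + 1))) → ∀ v,
      Filter.Tendsto x Filter.atTop (nhds v) → ∀ n, le (x n) v)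
    (φ : X → EReal)
    (hne_bot : ∀ x, φ x ≠ ⊥)
    (hbdd : ∃ c : ℝ, ∀ x, (c : EReal) ≤ φ x)
    (hlsc : ∀ x : ℕ → X, ∀ l : X, (∀ n, le (x n) (x (n + 1))) →
      Filter.Tendsto x Filter.atTop (nhds l) → (∀ n, le (x n) l) →
      (∀ n, φ (x (n + 1)) ≤ φ (x n)) → ∀ n, φ l ≤ φ (x n)) :
    ∀ u, φ u ≠ ⊤ →
      ∃ v, φ v ≠ ⊤ ∧ le u v ∧ (dist u v : EReal) ≤ φ u - φ v ∧
        ∀ x, le v x → x ≠ v → φ v < (dist v x : EReal) + φ x := by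
  let _ : Preorder X := { le := le, le_refl := hrefl, le_trans := htrans }
  have hX : IsStronglyComplete X :=
    ⟨fun x hx => hcomplete x fun n => hx n.le_succ,
      fun x hx => hselfClosed x fun n => hx n.le_succ⟩
  have hφ (x : X) (hx : φ x ≠ ⊤) : φ x = (φ x).toReal := (EReal.coe_toReal hx (hne_bot x)).symm
  obtain ⟨c, hc⟩ := hbdd
  intro u hu
  obtain ⟨v, ⟨huv, hv, hdist⟩, hmin⟩ := exists_mem_ekelandSet_subset_singleton hX
    (bddBelow_toReal_image_of_forall_coe_le hc)
    (lsc_toReal_of_lsc hne_bot fun x l hmono hx hxl hanti =>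
      hlsc x l (fun n => hmono n.le_succ) hx hxl fun n => hanti n.le_succ) hu
  refine ⟨v, hv, huv, ?_, fun x hvx hxv => ?_⟩
  · rw [hφ u hu, hφ v hv, ← EReal.coe_sub]
    exact EReal.coe_le_coe_iff.mpr hdist
  by_cases hx : φ x = ⊤
  · rw [hx, EReal.add_top_of_ne_bot (EReal.coe_ne_bot _)]
    exact hv.lt_top
  · rw [hφ v hv, hφ x hx, ← EReal.coe_add]
    exact EReal.coe_lt_coe_iff.mpr (lt_of_not_ge fun h => hxv (hmin ⟨hvx, hx, by linarith⟩))

/-- Monotone variational principle (EVP-m): on a strongly complete quasi-ordered metric space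
`(X; le; d)`, for a proper, bounded below, descending `(le, d)`-lsc function
`φ : X → ℝ ∪ {+∞}`, each `u ∈ Dom(φ)` admits a point `v ∈ Dom(φ)` with `u ≤ v`,
`d(u, v) ≤ φ u − φ v`, and such that every `x ≠ v` with `v ≤ x` satisfies
`d(v, x) + φ x > φ v`. -/
theorem stmt_16 {X : Type*} [MetricSpace X] (le : X → X → Prop)
    (hrefl : ∀ x, le x x)
    (htrans : ∀ x y z, le x y → le y z → le x z)
    (hcomplete : ∀ x : ℕ → X, (∀ n, le (x n) (x (n + 1))) → CauchySeq x →
      ∃ v, Filter.Tendsto x Filter.atTop (nhds v))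
    (hselfClosed : ∀ x : ℕ → X, (∀ n, le (x n) (x (n + 1))) → ∀ v,
      Filter.Tendsto x Filter.atTop (nhds v) → ∀ n, le (x n) v)
    (φ : X → EReal)
    (hne_bot : ∀ x, φ x ≠ ⊥)
    (hproper : ∃ x, φ x ≠ ⊤)
    (hbdd : ∃ c : ℝ, ∀ x, (c : EReal) ≤ φ x)
    (hlsc : ∀ x : ℕ → X, ∀ l : X, (∀ n, le (x n) (x (n + 1))) →
      Filter.Tendsto x Filter.atTop (nhds l) → (∀ n, le (x n) l) →
      (∀ n, φ (x (n + 1)) ≤ φ (x n)) → ∀ n, φ l ≤ φ (x n)) :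
    ∀ u, φ u ≠ ⊤ →
      ∃ v, φ v ≠ ⊤ ∧ le u v ∧ (dist u v : EReal) ≤ φ u - φ v ∧
        ∀ x, le v x → x ≠ v → φ v < (dist v x : EReal) + φ x :=
  stmt_16_general le hrefl htrans hcomplete hselfClosed φ hne_bot hbdd hlsc
end

section
/- (Finitary Ekeland variational principle.) Let (X,d) be a complete metric space and φ : X → ℝ be bounded below and d-lsc (lower semicontinuous: liminf_n φ(x_n) ≥ φ(x) whenever x_n → x). Then for each u ∈ X there exists v ∈ X such that: (i) d(u,v) ≤ φ(u) − φ(v); and (ii) d(v,x) > φ(v) − φ(x) for every x ∈ X with x ≠ v. -/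
/-- Finitary Ekeland variational principle (EVP-f): on a complete metric space `(X, d)`,
for a bounded below, lower semicontinuous function `φ : X → ℝ`, each `u ∈ X` admits a
point `v ∈ X` with `d(u, v) ≤ φ u − φ v`, and such that `d(v, x) > φ v − φ x` for every
`x ≠ v`. -/
theorem stmt_18 {X : Type*} [MetricSpace X] [CompleteSpace X]
    (φ : X → ℝ)
    (hbdd : ∃ c : ℝ, ∀ x, c ≤ φ x)
    (hlsc : LowerSemicontinuous φ) :
    ∀ u : X, ∃ v : X,
      dist u v ≤ φ u - φ v ∧ ∀ x, x ≠ v → φ v - φ x < dist v x := by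
  obtain ⟨c, hc⟩ := hbdd
  intro u
  -- the "slope set"
  set S : X → Set X := fun y => {x | dist y x ≤ φ y - φ x} with hS
  have hmemS : ∀ y, y ∈ S y := by
    intro y; simp [hS]
  -- step lemma: near-minimizer of φ on S y
  have step : ∀ (n : ℕ) (y : X), ∃ z, z ∈ S y ∧ ∀ w ∈ S y, φ z < φ w + (1/2)^n := by
    intro n y
    have hne : (φ '' S y).Nonempty := ⟨φ y, y, hmemS y, rfl⟩
    have hbd : BddBelow (φ '' S y) := ⟨c, by rintro _ ⟨x, -, rfl⟩; exact hc x⟩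
    obtain ⟨_, ⟨z, hz, rfl⟩, hzlt⟩ := Real.lt_sInf_add_pos hne (ε := (1/2)^n) (by positivity)
    exact ⟨z, hz, fun w hw => lt_of_lt_of_le hzlt (by
      have := csInf_le hbd ⟨w, hw, rfl⟩; linarith)⟩
  choose next hnext1 hnext2 using step
  -- the sequence
  let seq : ℕ → X := fun n => Nat.rec u (fun n y => next n y) n
  have hseq0 : seq 0 = u := rfl
  have hseqS : ∀ n, seq (n+1) ∈ S (seq n) := fun n => hnext1 n (seq n)
  have hseqMin : ∀ n, ∀ w ∈ S (seq n), φ (seq (n+1)) < φ w + (1/2)^n :=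
    fun n => hnext2 n (seq n)
  -- chained slope bound
  have hchain : ∀ n m, n ≤ m → dist (seq n) (seq m) ≤ φ (seq n) - φ (seq m) := by
    intro n m hnm
    induction m with
    | zero => simp [Nat.le_zero.mp hnm]
    | succ m ih =>
      rcases Nat.lt_or_ge n (m+1) with h | h
      · have hnm' : n ≤ m := Nat.lt_succ_iff.mp h
        have h1 := ih hnm'
        have h2 : dist (seq m) (seq (m+1)) ≤ φ (seq m) - φ (seq (m+1)) := hseqS m
        calc dist (seq n) (seq (m+1)) ≤ dist (seq n) (seq m) + dist (seq m) (seq (m+1)) :=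
              dist_triangle _ _ _
          _ ≤ _ := by linarith
      · have : n = m + 1 := le_antisymm hnm h
        simp [this]
  have hanti : ∀ n m, n ≤ m → φ (seq m) ≤ φ (seq n) := by
    intro n m hnm
    have := hchain n m hnm
    have := dist_nonneg (x := seq n) (y := seq m)
    linarith
  -- φ ∘ seq converges to its infimum
  have hbdbelow : BddBelow (Set.range (fun n => φ (seq n))) := ⟨c, by rintro _ ⟨n, rfl⟩; exact hc _⟩
  set L : ℝ := ⨅ n, φ (seq n) with hL
  have htendL : Filter.Tendsto (fun n => φ (seq n)) Filter.atTop (nhds L) :=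
    tendsto_atTop_ciInf (fun n m hnm => hanti n m hnm) hbdbelow
  have hLle : ∀ n, L ≤ φ (seq n) := fun n => ciInf_le hbdbelow n
  -- Cauchy
  have hcauchy : CauchySeq seq := by
    apply cauchySeq_of_le_tendsto_0 (b := fun N => φ (seq N) - L)
    · intro n m N hn hm
      rcases le_total n m with h | h
      · have := hchain n m h
        have h1 := hanti N n hn
        have h2 := hLle m
        linarith
      · have := hchain m n h
        rw [dist_comm]
        have h1 := hanti N m hm
        have h2 := hLle n
        linarith
    · have : Filter.Tendsto (fun N => φ (seq N) - L) Filter.atTop (nhds (L - L)) :=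
        htendL.sub tendsto_const_nhds
      simpa using this
  obtain ⟨v, hv⟩ := cauchySeq_tendsto_of_complete hcauchy
  -- φ v ≤ L by lower semicontinuity
  have hφvL : φ v ≤ L := by
    by_contra h
    push_neg at h
    have := hlsc v L h
    have hev : ∀ᶠ m in Filter.atTop, L < φ (seq m) := hv.eventually this
    -- but φ (seq m) → L, and we need contradiction: pick using that inf is approached
    -- L < φ v, and φ(seq m) → L, so eventually φ (seq m) < φ v; but lsc gives eventually L... 
    -- contradicting tendsto to L.
    have h2 : L < (L + φ v)/2 := by linarith
    have h3 : (L + φ v)/2 < φ v := by linarith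
    have hev2 : ∀ᶠ m in Filter.atTop, (L + φ v)/2 < φ (seq m) := hv.eventually (hlsc v _ h3)
    have hev3 : ∀ᶠ m in Filter.atTop, φ (seq m) < (L + φ v)/2 :=
      (htendL.eventually (eventually_lt_nhds h2)).mono (fun m hm => hm)
    obtain ⟨m, hm1, hm2⟩ := (hev2.and hev3).exists
    linarith
  -- v ∈ S (seq n) for each n
  have hvS : ∀ n, v ∈ S (seq n) := by
    intro n
    have hdist : Filter.Tendsto (fun m => dist (seq n) (seq m)) Filter.atTop
        (nhds (dist (seq n) v)) := (Continuous.dist continuous_const continuous_id).continuousAt.tendsto.comp hv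
    have hbound : ∀ᶠ m in Filter.atTop, dist (seq n) (seq m) ≤ φ (seq n) - L := by
      filter_upwards [Filter.eventually_ge_atTop n] with m hm
      have := hchain n m hm
      have := hLle m
      linarith
    have := le_of_tendsto hdist hbound
    show dist (seq n) v ≤ φ (seq n) - φ v
    linarith
  refine ⟨v, ?_, ?_⟩
  · have := hvS 0
    rw [hseq0] at this
    exact this
  · intro x hx
    by_contra h
    push_neg at h
    -- x ∈ S (seq n) for all n
    have hxS : ∀ n, x ∈ S (seq n) := by
      intro n
      have h1 : dist (seq n) v ≤ φ (seq n) - φ v := hvS n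
      show dist (seq n) x ≤ φ (seq n) - φ x
      calc dist (seq n) x ≤ dist (seq n) v + dist v x := dist_triangle _ _ _
        _ ≤ φ (seq n) - φ x := by linarith
    -- hence φ v ≤ φ x
    have hφvx : φ v ≤ φ x := by
      by_contra h2
      push_neg at h2
      obtain ⟨n, hn⟩ := exists_pow_lt_of_lt_one (x := φ v - φ x) (y := (1/2 : ℝ))
        (by linarith) (by norm_num)
      have h3 := hseqMin n x (hxS n)
      have h4 : φ v ≤ φ (seq (n+1)) := le_trans (hφvL) (hLle (n+1))
      linarith
    have h5 : (0:ℝ) < dist v x := dist_pos.mpr (Ne.symm hx)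
    have h6 : dist v x ≤ φ v - φ x := h
    linarith
end

section
/- (Discrete Lipschitz countable version of EVP.) Let (X,d) be a metric space that is discrete (for each x ∈ X there exists ρ > 0 with {u : d(x,u) < ρ} = {x}), bounded (sup{d(x,y) : x,y ∈ X} < ∞) and complete, and let φ : X → [0,∞) be d-nonexpansive (|φ(x) − φ(y)| ≤ d(x,y) for all x,y) with countable range φ(X). Let ≤ be the Brøndsted order attached to (d,φ): x ≤ y iff d(x,y) ≤ φ(x) − φ(y), and assume ≤ has the inf-lattice property (any two points x,y have an infimum x ∧ y with respect to ≤). Then ≤ is a Zorn order: the set of ≤-maximal elements is nonempty, and for each u ∈ X there exists a ≤-maximal v ∈ X with u ≤ v. -/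
/-- Discrete Lipschitz countable version of EVP (EVPdLc): let `(X, d)` be a discrete,
bounded, complete metric space, `φ : X → [0, ∞)` a `d`-nonexpansive function with countable
range, and `le` the Brøndsted order attached to `(d, φ)`, assumed to have the inf-lattice
property. Then `le` is a Zorn order: the set of `le`-maximal elements is nonempty, and every
`u ∈ X` lies below some `le`-maximal `v`. -/
theorem stmt_19 {X : Type*} [MetricSpace X] [CompleteSpace X] [Nonempty X]
    (hdiscrete : ∀ x : X, ∃ ρ > (0 : ℝ), ∀ u, dist x u < ρ → u = x)
    (hbounded : ∃ C : ℝ, ∀ x y : X, dist x y ≤ C)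
    (φ : X → ℝ)
    (hpos : ∀ x, 0 ≤ φ x)
    (hlip : ∀ x y, |φ x - φ y| ≤ dist x y)
    (hcount : (Set.range φ).Countable)
    (le : X → X → Prop)
    (hle : ∀ x y, le x y ↔ dist x y ≤ φ x - φ y)
    (hinf : ∀ x y : X, ∃ z, le z x ∧ le z y ∧ ∀ w, le w x → le w y → le w z) :
    (∃ z : X, ∀ w, le z w → w = z) ∧
    (∀ u : X, ∃ v, le u v ∧ ∀ w, le v w → w = v) := by
  have href : ∀ x, le x x := fun x => (hle x x).2 (by simp)
  have htrans : ∀ x y z, le x y → le y z → le x z := by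
    intro x y z hxy hyz
    rw [hle] at hxy hyz ⊢
    calc dist x z ≤ dist x y + dist y z := dist_triangle _ _ _
      _ ≤ (φ x - φ y) + (φ y - φ z) := add_le_add hxy hyz
      _ = φ x - φ z := by ring
  have hanti : ∀ x y, le x y → le y x → y = x := by
    intro x y hxy hyx
    rw [hle] at hxy hyx
    have hc : dist y x = dist x y := dist_comm y x
    have h0 : dist x y ≤ 0 := by linarith
    have := dist_le_zero.mp h0
    exact this.symm
  -- key: every nonempty chain has an upper bound
  have key : ∀ S : Set X, S.Nonempty →
      (∀ x ∈ S, ∀ y ∈ S, x ≠ y → le x y ∨ le y x) → ∃ v, ∀ x ∈ S, le x v := by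
    intro S hSne hchain
    set m : ℝ := sInf (φ '' S) with hm
    have hbdd : BddBelow (φ '' S) := ⟨0, by rintro _ ⟨x, -, rfl⟩; exact hpos x⟩
    have hSimg : (φ '' S).Nonempty := hSne.image φ
    have hgem : ∀ x ∈ S, m ≤ φ x := fun x hx => csInf_le hbdd ⟨x, hx, rfl⟩
    have hsel : ∀ n : ℕ, ∃ x ∈ S, φ x < m + 1 / (n + 1) := by
      intro n
      have hlt : m < m + 1 / (n + 1) := by
        have : (0:ℝ) < 1 / (n + 1) := by positivity
        linarith
      obtain ⟨y, hy, hylt⟩ := exists_lt_of_csInf_lt hSimg hlt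
      obtain ⟨x, hxS, rfl⟩ := hy
      exact ⟨x, hxS, hylt⟩
    choose x hxS hxlt using hsel
    -- Cauchy
    have hdistbound : ∀ i j : ℕ, dist (x i) (x j) ≤ 1 / (i + 1) + 1 / (j + 1) := by
      intro i j
      by_cases hij : x i = x j
      · rw [hij, dist_self]; positivity
      · rcases hchain _ (hxS i) _ (hxS j) hij with h | h
        · rw [hle] at h
          have := hgem _ (hxS j)
          have := hxlt i
          have : (0:ℝ) ≤ 1 / (j + 1) := by positivity
          linarith [(hle (x i) (x j)).mp ((hle (x i) (x j)).mpr ((hle (x i) (x j)).mp (by rwa [hle])))]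
        · rw [hle] at h
          rw [dist_comm] at h
          have := hgem _ (hxS i)
          have := hxlt j
          have : (0:ℝ) ≤ 1 / (i + 1) := by positivity
          linarith
    have hcauchy : CauchySeq x := by
      rw [Metric.cauchySeq_iff]
      intro ε hε
      obtain ⟨N, hN⟩ := exists_nat_one_div_lt (show (0:ℝ) < ε / 2 by linarith)
      refine ⟨N, fun i hi j hj => ?_⟩
      have h1 : 1 / ((i:ℝ) + 1) ≤ 1 / (N + 1) := by
        apply one_div_le_one_div_of_le (by positivity)
        exact_mod_cast Nat.succ_le_succ hi
      have h2 : 1 / ((j:ℝ) + 1) ≤ 1 / (N + 1) := by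
        apply one_div_le_one_div_of_le (by positivity)
        exact_mod_cast Nat.succ_le_succ hj
      calc dist (x i) (x j) ≤ 1 / (i + 1) + 1 / (j + 1) := hdistbound i j
        _ ≤ 1 / (N + 1) + 1 / (N + 1) := add_le_add h1 h2
        _ < ε / 2 + ε / 2 := add_lt_add hN hN
        _ = ε := by ring
    obtain ⟨v, hv⟩ := cauchySeq_tendsto_of_complete hcauchy
    -- φ (x n) → m
    have htend0 : Filter.Tendsto (fun n : ℕ => 1 / ((n:ℝ) + 1)) Filter.atTop (nhds 0) :=
      tendsto_one_div_add_atTop_nhds_zero_nat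
    have hφm : Filter.Tendsto (fun n => φ (x n)) Filter.atTop (nhds m) := by
      have hup : Filter.Tendsto (fun n : ℕ => m + 1 / ((n:ℝ) + 1)) Filter.atTop (nhds (m + 0)) :=
        Filter.Tendsto.add tendsto_const_nhds htend0
      rw [add_zero] at hup
      exact tendsto_of_tendsto_of_tendsto_of_le_of_le tendsto_const_nhds hup
        (fun n => hgem _ (hxS n)) (fun n => le_of_lt (hxlt n))
    -- φ continuous
    have hφcont : Filter.Tendsto (fun n => φ (x n)) Filter.atTop (nhds (φ v)) := by
      rw [tendsto_iff_dist_tendsto_zero]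
      apply squeeze_zero (fun n => dist_nonneg) (fun n => ?_) (by
        rw [tendsto_iff_dist_tendsto_zero] at hv
        simpa using hv)
      · rw [Real.dist_eq]
        exact hlip _ _ |>.trans (le_of_eq rfl)
    have hmv : m = φ v := tendsto_nhds_unique hφm hφcont
    refine ⟨v, fun y hy => ?_⟩
    rw [hle]
    have hptwise : ∀ n, dist y (x n) ≤ φ y - φ (x n) + 2 * (1 / (n + 1)) := by
      intro n
      by_cases hxy : y = x n
      · rw [hxy, dist_self]
        have : (0:ℝ) ≤ 1 / (n + 1) := by positivity
        linarith
      · rcases hchain _ hy _ (hxS n) hxy with h | h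
        · rw [hle] at h
          have : (0:ℝ) ≤ 1 / (n + 1) := by positivity
          linarith
        · rw [hle] at h
          have hcm : dist y (x n) = dist (x n) y := dist_comm _ _
          have h1 := hgem _ hy
          have h2 := hxlt n
          linarith
    have h1 : Filter.Tendsto (fun n => dist y (x n)) Filter.atTop (nhds (dist y v)) :=
      Filter.Tendsto.dist tendsto_const_nhds hv
    have h2 : Filter.Tendsto (fun n => φ y - φ (x n) + 2 * (1 / ((n:ℝ) + 1)))
        Filter.atTop (nhds (φ y - m + 2 * 0)) :=
      Filter.Tendsto.add (Filter.Tendsto.sub tendsto_const_nhds hφm)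
        (Filter.Tendsto.const_mul 2 htend0)
    have := le_of_tendsto_of_tendsto' h1 h2 hptwise
    rw [hmv] at this
    linarith
  -- main argument: every u lies below a maximal element
  have main : ∀ u : X, ∃ v, le u v ∧ ∀ w, le v w → w = v := by
    intro u
    let T := {x : X // le u x}
    have hzorn := exists_maximal_of_chains_bounded
      (r := fun a b : T => le a.1 b.1)
      (fun c hc => by
        rcases Set.eq_empty_or_nonempty c with hce | hcne
        · exact ⟨⟨u, href u⟩, by simp [hce]⟩
        · set S : Set X := Subtype.val '' c with hS
          have hSne : S.Nonempty := hcne.image _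
          have hchain : ∀ x ∈ S, ∀ y ∈ S, x ≠ y → le x y ∨ le y x := by
            rintro _ ⟨a, ha, rfl⟩ _ ⟨b, hb, rfl⟩ hne
            exact hc ha hb (fun h => hne (by rw [h]))
          obtain ⟨v, hvub⟩ := key S hSne hchain
          obtain ⟨a₀, ha₀⟩ := hcne
          have huv : le u v := htrans _ _ _ a₀.2 (hvub a₀.1 ⟨a₀, ha₀, rfl⟩)
          exact ⟨⟨v, huv⟩, fun a ha => hvub a.1 ⟨a, ha, rfl⟩⟩)
      (fun {a b c} hab hbc => htrans _ _ _ hab hbc)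
    obtain ⟨mm, hmm⟩ := hzorn
    refine ⟨mm.1, mm.2, fun w hw => ?_⟩
    have huw : le u w := htrans _ _ _ mm.2 hw
    exact hanti _ _ hw (hmm ⟨w, huw⟩ hw)
  obtain ⟨u⟩ := ‹Nonempty X›
  obtain ⟨v, -, hvmax⟩ := main u
  exact ⟨⟨v, hvmax⟩, main⟩
end
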